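/- arXiv:hep-th/0606280 — 6 statements merged into one kernel-verified Lean document; each statement's English description precedes it below -/
import Mathlib

section
/- Crossing symmetry of the q-oscillator L-operator: with L̄⁺(ζ) := σ² · L⁺(ζq⁻¹)ᵀ · σ² (ᵀ denotes matrix transposition, which does not affect the R-valued entries), one has L⁺(ζ) · L̄⁺(ζ) = L̄⁺(ζ) · L⁺(ζ) = (ζ − ζ⁻¹) · 1₂ as 2×2 matrices over R. -/
open Matrix

/-- The q-oscillator L-operator `L⁺(x)` at `x = r²`, with chosen square root `x^{1/2} = r`;
here `q = s⁴`, `q^{1/4} = s`, and `κ` plays the role of `q^D`. -/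
noncomputable def Lp (R : Type*) [Ring R] [Algebra ℂ R] (s κ : Rˣ) (a astar : R)
    (r : Rˣ) : Matrix (Fin 2) (Fin 2) R :=
  (algebraMap ℂ R Complex.I * (↑r⁻¹ * ↑s⁻¹)) •
    (!![(1 : R), -(↑r ^ 2 * astar); -(↑r ^ 2 * a), 1 - ↑r ^ 4 * ↑s ^ 8 * ↑κ ^ 2] *
      !![(↑κ : R), 0; 0, ↑κ⁻¹])

/-- The Pauli matrix σ² with entries in `R`. -/
noncomputable def sigma2 (R : Type*) [Ring R] [Algebra ℂ R] : Matrix (Fin 2) (Fin 2) R :=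
  !![0, -algebraMap ℂ R Complex.I; algebraMap ℂ R Complex.I, 0]

lemma fin2_ext {R : Type*} [Ring R] {a b c d e f g h : R}
    (h1 : a = e) (h2 : b = f) (h3 : c = g) (h4 : d = h) :
    !![a,b;c,d] = !![e,f;g,h] := by rw [h1,h2,h3,h4]

lemma tpose2 {R : Type*} [Ring R] (a b c d : R) : !![a,b;c,d]ᵀ = !![a,c;b,d] := by
  ext i j; fin_cases i <;> fin_cases j <;> rfl

lemma smul_fin2 {R : Type*} [Ring R] (x a b c d : R) :
    x • !![a,b;c,d] = !![x*a,x*b;x*c,x*d] := by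
  simp [Matrix.smul_of, smul_eq_mul]

lemma Lp_eq (R : Type*) [Ring R] [Algebra ℂ R] (s κ : Rˣ) (a astar : R) (r : Rˣ) :
    Lp R s κ a astar r =
      !![algebraMap ℂ R Complex.I * (↑r⁻¹ * ↑s⁻¹) * ↑κ,
         -(algebraMap ℂ R Complex.I * (↑r⁻¹ * ↑s⁻¹) * (↑r ^ 2 * astar * ↑κ⁻¹));
         -(algebraMap ℂ R Complex.I * (↑r⁻¹ * ↑s⁻¹) * (↑r ^ 2 * a * ↑κ)),
         algebraMap ℂ R Complex.I * (↑r⁻¹ * ↑s⁻¹) * ((1 - ↑r ^ 4 * ↑s ^ 8 * ↑κ ^ 2) * ↑κ⁻¹)] := by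
  rw [Lp, Matrix.mul_fin_two, smul_fin2]
  exact fin2_ext (by simp) (by simp [mul_assoc]) (by simp [mul_assoc]) (by simp [mul_assoc])

lemma conj2 {R : Type*} [Ring R] [Algebra ℂ R] (p q r t : R)
    (hC : ∀ x : R, algebraMap ℂ R Complex.I * x = x * algebraMap ℂ R Complex.I) :
    sigma2 R * (!![p,q;r,t])ᵀ * sigma2 R = !![t,-q;-r,p] := by
  have hC2 : algebraMap ℂ R Complex.I * algebraMap ℂ R Complex.I = -1 := by
    rw [← RingHom.map_mul, Complex.I_mul_I, RingHom.map_neg, RingHom.map_one]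
  rw [tpose2, sigma2, Matrix.mul_fin_two, Matrix.mul_fin_two]
  refine fin2_ext ?_ ?_ ?_ ?_ <;>
    simp [mul_assoc, ← hC, ← mul_assoc, hC2]

lemma cml {R : Type*} [Ring R] {z : R} (h : ∀ x, z * x = x * z) (t y : R) :
    t * (z * y) = z * (t * y) := by rw [← mul_assoc, ← h t, mul_assoc]
lemma cmr {R : Type*} [Ring R] {z : R} (h : ∀ x, z * x = x * z) (t : R) :
    t * z = z * t := (h t).symm
lemma nest {R : Type*} [Ring R] {x y p : R} (h : x * y = p) (t : R) :
    x * (y * t) = p * t := by rw [← mul_assoc, h]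

set_option maxHeartbeats 3200000 in
lemma core (R : Type*) [Ring R] (C S Si W Wi K Ki A As : R)
    (hC : ∀ x, C * x = x * C) (hS : ∀ x, S * x = x * S) (hSi : ∀ x, Si * x = x * Si)
    (hW : ∀ x, W * x = x * W) (hWi : ∀ x, Wi * x = x * Wi)
    (iS : S * Si = 1) (iS' : Si * S = 1) (iW : W * Wi = 1) (iW' : Wi * W = 1)
    (iK : K * Ki = 1) (iK' : Ki * K = 1) (iC : C * C = -1)
    (h1 : K * As = S ^ 4 * (As * K)) (h2 : K * A = Si ^ 4 * (A * K))
    (h3 : As * A = 1 - K ^ 2) (h4 : A * As = 1 - S ^ 8 * K ^ 2) :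
    !![C * (Wi * Si) * K, -(C * (Wi * Si) * (W ^ 2 * As * Ki));
       -(C * (Wi * Si) * (W ^ 2 * A * K)), C * (Wi * Si) * ((1 - W ^ 4 * S ^ 8 * K ^ 2) * Ki)] *
      !![C * (S ^ 2 * Wi * Si) * ((1 - (W * Si ^ 2) ^ 4 * S ^ 8 * K ^ 2) * Ki),
         - -(C * (S ^ 2 * Wi * Si) * ((W * Si ^ 2) ^ 2 * As * Ki));
         - -(C * (S ^ 2 * Wi * Si) * ((W * Si ^ 2) ^ 2 * A * K)),
         C * (S ^ 2 * Wi * Si) * K] = !![W ^ 2 - Wi ^ 2, 0; 0, W ^ 2 - Wi ^ 2] ∧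
    !![C * (S ^ 2 * Wi * Si) * ((1 - (W * Si ^ 2) ^ 4 * S ^ 8 * K ^ 2) * Ki),
       - -(C * (S ^ 2 * Wi * Si) * ((W * Si ^ 2) ^ 2 * As * Ki));
       - -(C * (S ^ 2 * Wi * Si) * ((W * Si ^ 2) ^ 2 * A * K)),
       C * (S ^ 2 * Wi * Si) * K] *
      !![C * (Wi * Si) * K, -(C * (Wi * Si) * (W ^ 2 * As * Ki));
         -(C * (Wi * Si) * (W ^ 2 * A * K)), C * (Wi * Si) * ((1 - W ^ 4 * S ^ 8 * K ^ 2) * Ki)]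
      = !![W ^ 2 - Wi ^ 2, 0; 0, W ^ 2 - Wi ^ 2] := by
  have cancelK : ∀ x y : R, K * x = K * y → x = y := fun x y h => by
    have := congrArg (Ki * ·) h
    simpa [← mul_assoc, iK', one_mul] using this
  have kiA : Ki * A = S ^ 4 * (A * Ki) := by
    apply cancelK
    simp only [nest iK', iK', one_mul, nest h2, h2, nest h1, h1,
      cml hS A, cmr hS A, cml hS As, cmr hS As, cml hS K, cmr hS K, cml hS Ki, cmr hS Ki,
      cml hSi A, cmr hSi A, cml hSi As, cmr hSi As, cml hSi K, cmr hSi K, cml hSi Ki, cmr hSi Ki,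
      cml hS Si, cmr hS Si,
      pow_succ, pow_zero, mul_assoc, nest iS, iS, nest iS', iS', mul_one, nest iK, iK]
  have kiAs : Ki * As = Si ^ 4 * (As * Ki) := by
    apply cancelK
    simp only [nest iK', iK', one_mul, nest h2, h2, nest h1, h1,
      cml hS A, cmr hS A, cml hS As, cmr hS As, cml hS K, cmr hS K, cml hS Ki, cmr hS Ki,
      cml hSi A, cmr hSi A, cml hSi As, cmr hSi As, cml hSi K, cmr hSi K, cml hSi Ki, cmr hSi Ki,
      cml hS Si, cmr hS Si,
      pow_succ, pow_zero, mul_assoc, nest iS, iS, nest iS', iS', mul_one, nest iK, iK]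
  constructor <;>
  · rw [Matrix.mul_fin_two]
    refine fin2_ext ?_ ?_ ?_ ?_ <;>
    · simp only [pow_succ, pow_zero, one_mul, mul_add, add_mul, mul_sub, sub_mul,
        neg_mul, mul_neg, neg_neg, mul_one, mul_zero, zero_mul, mul_assoc,
        h1, nest h1, h2, nest h2, kiA, nest kiA, kiAs, nest kiAs, h3, nest h3, h4, nest h4,
        cml hC A, cmr hC A, cml hC As, cmr hC As, cml hC K, cmr hC K, cml hC Ki, cmr hC Ki,
        cml hS A, cmr hS A, cml hS As, cmr hS As, cml hS K, cmr hS K, cml hS Ki, cmr hS Ki,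
        cml hSi A, cmr hSi A, cml hSi As, cmr hSi As, cml hSi K, cmr hSi K, cml hSi Ki, cmr hSi Ki,
        cml hW A, cmr hW A, cml hW As, cmr hW As, cml hW K, cmr hW K, cml hW Ki, cmr hW Ki,
        cml hWi A, cmr hWi A, cml hWi As, cmr hWi As, cml hWi K, cmr hWi K, cml hWi Ki, cmr hWi Ki,
        cml hC W, cmr hC W, cml hC Wi, cmr hC Wi, cml hC S, cmr hC S, cml hC Si, cmr hC Si,
        cml hW S, cmr hW S, cml hW Si, cmr hW Si, cml hWi S, cmr hWi S, cml hWi Si, cmr hWi Si,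
        cml hW Wi, cmr hW Wi, cml hS Si, cmr hS Si,
        nest iS, iS, nest iS', iS', nest iW, iW, nest iW', iW', nest iK, iK, nest iK', iK',
        nest iC, iC, neg_one_mul, one_mul]
      try abel

/-- Crossing symmetry of the q-oscillator L-operator:
`L⁺(ζ) ⬝ L̄⁺(ζ) = L̄⁺(ζ) ⬝ L⁺(ζ) = (ζ − ζ⁻¹) 1₂`, where
`L̄⁺(ζ) = σ² ⬝ L⁺(ζq⁻¹)ᵀ ⬝ σ²`.  Here `ζ = w²`, `(ζq⁻¹)^{1/2} = w s⁻²`. -/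
theorem crossing_symmetry (R : Type*) [Ring R] [Algebra ℂ R] (s w κ : Rˣ) (a astar : R)
    (hs : ∀ x : R, ↑s * x = x * ↑s)
    (hw : ∀ x : R, ↑w * x = x * ↑w)
    (h1 : ↑κ * astar = ↑s ^ 4 * (astar * ↑κ))
    (h2 : ↑κ * a = ↑s⁻¹ ^ 4 * (a * ↑κ))
    (h3 : astar * a = 1 - ↑κ ^ 2)
    (h4 : a * astar = 1 - ↑s ^ 8 * ↑κ ^ 2) :
    Lp R s κ a astar w * (sigma2 R * (Lp R s κ a astar (w * s⁻¹ ^ 2))ᵀ * sigma2 R) =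
        ((↑w : R) ^ 2 - (↑w⁻¹ : R) ^ 2) • (1 : Matrix (Fin 2) (Fin 2) R) ∧
      (sigma2 R * (Lp R s κ a astar (w * s⁻¹ ^ 2))ᵀ * sigma2 R) * Lp R s κ a astar w =
        ((↑w : R) ^ 2 - (↑w⁻¹ : R) ^ 2) • (1 : Matrix (Fin 2) (Fin 2) R) := by
  have hC : ∀ x : R, algebraMap ℂ R Complex.I * x = x * algebraMap ℂ R Complex.I :=
    fun x => Algebra.commutes _ _
  have hsi : ∀ x : R, ↑s⁻¹ * x = x * ↑s⁻¹ := fun x => by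
    have := congrArg (fun y => (↑s⁻¹ : R) * y * ↑s⁻¹) (hs x)
    simp only [← mul_assoc, Units.inv_mul, one_mul] at this
    simp only [mul_assoc, Units.mul_inv, mul_one] at this
    exact this.symm
  have hwi : ∀ x : R, ↑w⁻¹ * x = x * ↑w⁻¹ := fun x => by
    have := congrArg (fun y => (↑w⁻¹ : R) * y * ↑w⁻¹) (hw x)
    simp only [← mul_assoc, Units.inv_mul, one_mul] at this
    simp only [mul_assoc, Units.mul_inv, mul_one] at this
    exact this.symm
  have iC : algebraMap ℂ R Complex.I * algebraMap ℂ R Complex.I = -1 := by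
    rw [← RingHom.map_mul, Complex.I_mul_I, RingHom.map_neg, RingHom.map_one]
  have key := core R (algebraMap ℂ R Complex.I) ↑s ↑s⁻¹ ↑w ↑w⁻¹ ↑κ ↑κ⁻¹ a astar
    hC hs hsi hw hwi (Units.mul_inv s) (Units.inv_mul s) (Units.mul_inv w) (Units.inv_mul w)
    (Units.mul_inv κ) (Units.inv_mul κ) iC h1 h2 h3 h4
  have hsv : ((↑(s ^ 2)⁻¹ : R)) = ↑s⁻¹ ^ 2 := by
    rw [← inv_pow, Units.val_pow_eq_pow_val]
  constructor <;>
  · rw [Lp_eq, Lp_eq, conj2 _ _ _ _ hC, Matrix.one_fin_two, smul_fin2]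
    simp only [_root_.mul_inv_rev, inv_pow, inv_inv, Units.val_mul,
      Units.val_pow_eq_pow_val, mul_zero, smul_eq_mul, mul_one, hsv]
    first
    | exact key.1
    | exact key.2
end

section
/- Fusion (triangularization) of the product of the q-oscillator L-operator with the six-vertex L-operator: with G⁺ := diag(κ⁻¹, κ) · [[1, a⋆],[0, 1]] (a 2×2 matrix in the auxiliary space a with entries in R, acting as the identity on the quantum space j), one has L⁺_{A,j}(ζ) · L_{a,j}(ζ) · G⁺ = G⁺ · L⁺_{{A,a},j}(ζ), where L⁺_{A,j}(ζ) := 1₂ ⊗_a L⁺(ζ) acts in space j, L_{a,j}(ζ) := R(ζ) is the six-vertex R-matrix acting on a ⊗ j, and L⁺_{{A,a},j}(ζ) is the block lower-triangular 4×4 matrix over R given by the 2×2 block matrix in space a: [[(ζq − ζ⁻¹q⁻¹) L⁺(ζq⁻¹) q^{−σ³/2}, 0],[(q − q⁻¹) L⁺(ζq) σ⁺ q^{1/2} κ⁻², (ζ − ζ⁻¹) L⁺(ζq) q^{σ³/2}]] (the block entries act in space j). -/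
open Matrix Kronecker
/-- The six-vertex R-matrix with diagonal entries `b` (for equal pairs), `c`,
and off-diagonal entry `d`, as a matrix on `ℂ² ⊗ ℂ²` with entries in `R`. -/
def sixV (R : Type*) [Ring R] (b c d : R) :
    Matrix (Fin 2 × Fin 2) (Fin 2 × Fin 2) R := fun p p' =>
  if p = p' then (if p.1 = p.2 then b else c)
  else if p.1 = p'.2 ∧ p.2 = p'.1 then d else 0

/-- The fused L-operator `L⁺_{{A,a},j}(ζ)` at `ζ = r²`: the block lower-triangular matrix
`[[(ζq − ζ⁻¹q⁻¹) L⁺(ζq⁻¹) q^{−σ³/2}, 0],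
  [(q − q⁻¹) L⁺(ζq) σ⁺ q^{1/2}κ⁻², (ζ − ζ⁻¹) L⁺(ζq) q^{σ³/2}]]`,
a 2×2 block matrix in the auxiliary space (first index), blocks acting in
the quantum space (second index). -/
noncomputable def fusedL (R : Type*) [Ring R] [Algebra ℂ R] (s κ : Rˣ) (a astar : R)
    (r : Rˣ) : Matrix (Fin 2 × Fin 2) (Fin 2 × Fin 2) R := fun p p' =>
  ![![((↑r : R) ^ 2 * ↑s ^ 4 - (↑r⁻¹ : R) ^ 2 * ↑s⁻¹ ^ 4) •
        (Lp R s κ a astar (r * s⁻¹ ^ 2) * !![((↑s⁻¹ : R) ^ 2), 0; 0, (↑s : R) ^ 2]),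
      (0 : Matrix (Fin 2) (Fin 2) R)],
    ![((↑s : R) ^ 4 - (↑s⁻¹ : R) ^ 4) •
        (Lp R s κ a astar (r * s ^ 2) * !![(0 : R), 1; 0, 0] *
          (((↑s : R) ^ 2 * (↑κ⁻¹ : R) ^ 2) • (1 : Matrix (Fin 2) (Fin 2) R))),
      ((↑r : R) ^ 2 - (↑r⁻¹ : R) ^ 2) •
        (Lp R s κ a astar (r * s ^ 2) * !![((↑s : R) ^ 2), 0; 0, (↑s⁻¹ : R) ^ 2])]]
    p.1 p'.1 p.2 p'.2

set_option maxHeartbeats 10000000 in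
/-- Fusion (triangularization): with `G⁺ = diag(κ⁻¹,κ) ⬝ [[1,a⋆],[0,1]]` acting in the
auxiliary space, `L⁺_{A,j}(ζ) ⬝ L_{a,j}(ζ) ⬝ G⁺ = G⁺ ⬝ L⁺_{{A,a},j}(ζ)`, where
`L⁺_{A,j}(ζ) = 1 ⊗ L⁺(ζ)` and `L_{a,j}(ζ)` is the six-vertex R-matrix. -/
theorem fusion (R : Type*) [Ring R] [Algebra ℂ R] (s w κ : Rˣ) (a astar : R)
    (hs : ∀ x : R, ↑s * x = x * ↑s)
    (hw : ∀ x : R, ↑w * x = x * ↑w)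
    (h1 : ↑κ * astar = ↑s ^ 4 * (astar * ↑κ))
    (h2 : ↑κ * a = ↑s⁻¹ ^ 4 * (a * ↑κ))
    (h3 : astar * a = 1 - ↑κ ^ 2)
    (h4 : a * astar = 1 - ↑s ^ 8 * ↑κ ^ 2) :
    ((1 : Matrix (Fin 2) (Fin 2) R) ⊗ₖ Lp R s κ a astar w) *
        sixV R ((↑w : R) ^ 2 * ↑s ^ 4 - (↑w⁻¹ : R) ^ 2 * ↑s⁻¹ ^ 4)
          ((↑w : R) ^ 2 - (↑w⁻¹ : R) ^ 2) ((↑s : R) ^ 4 - (↑s⁻¹ : R) ^ 4) *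
        ((!![(↑κ⁻¹ : R), 0; 0, ↑κ] * !![(1 : R), astar; 0, 1]) ⊗ₖ
          (1 : Matrix (Fin 2) (Fin 2) R)) =
      ((!![(↑κ⁻¹ : R), 0; 0, ↑κ] * !![(1 : R), astar; 0, 1]) ⊗ₖ
          (1 : Matrix (Fin 2) (Fin 2) R)) *
        fusedL R s κ a astar w := by
  have hsi : ∀ x : R, (↑s⁻¹ : R) * x = x * ↑s⁻¹ := by
    intro x
    have h := congrArg (fun y => (↑s⁻¹ : R) * y * ↑s⁻¹) (hs x)
    simpa [mul_assoc, Units.inv_mul_cancel_left, Units.mul_inv_cancel_left,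
      Units.mul_inv, Units.inv_mul, mul_one] using h.symm
  have hwi : ∀ x : R, (↑w⁻¹ : R) * x = x * ↑w⁻¹ := by
    intro x
    have h := congrArg (fun y => (↑w⁻¹ : R) * y * ↑w⁻¹) (hw x)
    simpa [mul_assoc, Units.inv_mul_cancel_left, Units.mul_inv_cancel_left,
      Units.mul_inv, Units.inv_mul, mul_one] using h.symm
  have SWt : ∀ c x : R, c * x = x * c → ∀ t : R, x * (c * t) = c * (x * t) := by
    intro c x h t; rw [← mul_assoc, ← h, mul_assoc]
  have iSWt : ∀ x t : R, x * (algebraMap ℂ R Complex.I * t) =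
      algebraMap ℂ R Complex.I * (x * t) := fun x t =>
    SWt _ x (Algebra.commutes Complex.I x) t
  have iSW : ∀ x : R, x * algebraMap ℂ R Complex.I = algebraMap ℂ R Complex.I * x :=
    fun x => (Algebra.commutes Complex.I x).symm
  have pw2 : ∀ x : R, x ^ 2 = x * x := fun x => pow_two x
  have pw4 : ∀ x : R, x ^ 4 = x * x * (x * x) := by
    intro x; rw [show (4:ℕ) = 2+2 from rfl, pow_add, pow_two]
  have pw8 : ∀ x : R, x ^ 8 = x * x * (x * x) * (x * x * (x * x)) := by
    intro x; rw [show (8:ℕ) = 4+4 from rfl, pow_add, pw4]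
  -- κ commutation in expanded form
  have hk1b : (↑κ : R) * astar = ↑s * (↑s * (↑s * (↑s * (astar * ↑κ)))) := by
    rw [h1, pw4]; simp only [mul_assoc]
  have hk1t : ∀ t : R, (↑κ : R) * (astar * t) = ↑s * (↑s * (↑s * (↑s * (astar * (↑κ * t))))) := by
    intro t; rw [← mul_assoc, hk1b]; simp only [mul_assoc]
  have hk2b : (↑κ : R) * a = ↑s⁻¹ * (↑s⁻¹ * (↑s⁻¹ * (↑s⁻¹ * (a * ↑κ)))) := by
    rw [h2, pw4]; simp only [mul_assoc]
  have hk2t : ∀ t : R, (↑κ : R) * (a * t) = ↑s⁻¹ * (↑s⁻¹ * (↑s⁻¹ * (↑s⁻¹ * (a * (↑κ * t))))) := by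
    intro t; rw [← mul_assoc, hk2b]; simp only [mul_assoc]
  have hk3b : (↑κ⁻¹ : R) * astar = ↑s⁻¹ * (↑s⁻¹ * (↑s⁻¹ * (↑s⁻¹ * (astar * ↑κ⁻¹)))) := by
    have h := congrArg (fun y => (↑κ⁻¹ : R) * y * ↑κ⁻¹) h1
    simp only [mul_assoc, Units.inv_mul_cancel_left, Units.mul_inv_cancel_left,
      Units.mul_inv, Units.inv_mul, mul_one] at h
    rw [h, pw4]
    simp only [mul_assoc, SWt (↑s : R) (↑κ⁻¹ : R) (hs ↑κ⁻¹), Units.inv_mul_cancel_left]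
  have hk3t : ∀ t : R, (↑κ⁻¹ : R) * (astar * t) =
      ↑s⁻¹ * (↑s⁻¹ * (↑s⁻¹ * (↑s⁻¹ * (astar * (↑κ⁻¹ * t))))) := by
    intro t; rw [← mul_assoc, hk3b]; simp only [mul_assoc]
  have hk4b : (↑κ⁻¹ : R) * a = ↑s * (↑s * (↑s * (↑s * (a * ↑κ⁻¹)))) := by
    have h := congrArg (fun y => (↑κ⁻¹ : R) * y * ↑κ⁻¹) h2
    simp only [mul_assoc, Units.inv_mul_cancel_left, Units.mul_inv_cancel_left,
      Units.mul_inv, Units.inv_mul, mul_one] at h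
    rw [h, pw4]
    simp only [mul_assoc, SWt (↑s⁻¹ : R) (↑κ⁻¹ : R) (hsi ↑κ⁻¹), Units.mul_inv_cancel_left]
  have hk4t : ∀ t : R, (↑κ⁻¹ : R) * (a * t) = ↑s * (↑s * (↑s * (↑s * (a * (↑κ⁻¹ * t))))) := by
    intro t; rw [← mul_assoc, hk4b]; simp only [mul_assoc]
  have h3b : astar * a = 1 + -((↑κ : R) * ↑κ) := by
    rw [h3, pw2, sub_eq_add_neg]
  have h3t : ∀ t : R, astar * (a * t) = t + -((↑κ : R) * (↑κ * t)) := by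
    intro t; rw [← mul_assoc, h3b, add_mul, one_mul, neg_mul]
    simp only [mul_assoc]
  have h4b : a * astar =
      1 + -(↑s * (↑s * (↑s * (↑s * (↑s * (↑s * (↑s * (↑s * ((↑κ:R) * ↑κ))))))))) := by
    rw [h4, pw2, pw8, sub_eq_add_neg]; simp only [mul_assoc]
  have h4t : ∀ t : R, a * (astar * t) =
      t + -(↑s * (↑s * (↑s * (↑s * (↑s * (↑s * (↑s * (↑s * ((↑κ:R) * (↑κ * t)))))))))) := by
    intro t; rw [← mul_assoc, h4b, add_mul, one_mul, neg_mul]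
    simp only [mul_assoc]
  have key : ∀ i j k l : Fin 2,
      (((1 : Matrix (Fin 2) (Fin 2) R) ⊗ₖ Lp R s κ a astar w) *
        sixV R ((↑w : R) ^ 2 * ↑s ^ 4 - (↑w⁻¹ : R) ^ 2 * ↑s⁻¹ ^ 4)
          ((↑w : R) ^ 2 - (↑w⁻¹ : R) ^ 2) ((↑s : R) ^ 4 - (↑s⁻¹ : R) ^ 4) *
        ((!![(↑κ⁻¹ : R), 0; 0, ↑κ] * !![(1 : R), astar; 0, 1]) ⊗ₖ
          (1 : Matrix (Fin 2) (Fin 2) R))) (i, j) (k, l) =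
      (((!![(↑κ⁻¹ : R), 0; 0, ↑κ] * !![(1 : R), astar; 0, 1]) ⊗ₖ
          (1 : Matrix (Fin 2) (Fin 2) R)) *
        fusedL R s κ a astar w) (i, j) (k, l) := by
    simp only [Fin.forall_fin_two]
    repeat' apply And.intro
    all_goals
      simp only [Matrix.mul_apply, Fintype.sum_prod_type, Fin.sum_univ_two,
        Matrix.kroneckerMap_apply, Matrix.one_apply, sixV, fusedL, Lp,
        Matrix.smul_apply, Matrix.cons_val', Matrix.cons_val_zero, Matrix.cons_val_one,
        Matrix.head_cons, Matrix.head_fin_const, Matrix.empty_val', Matrix.cons_val_fin_one,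
        Matrix.zero_apply, smul_eq_mul, Matrix.vecMul, dotProduct,
        Matrix.one_apply_eq, Matrix.one_apply_ne]
      try norm_num [Prod.ext_iff, Fin.ext_iff, _root_.mul_inv_rev, ← inv_pow, inv_inv,
        Units.val_pow_eq_pow_val, Units.val_mul]
      try simp only [Matrix.mul_apply, Fintype.sum_prod_type, Fin.sum_univ_two,
        Matrix.kroneckerMap_apply, Matrix.one_apply, sixV, fusedL, Lp,
        Matrix.smul_apply, Matrix.cons_val', Matrix.cons_val_zero, Matrix.cons_val_one,
        Matrix.head_cons, Matrix.head_fin_const, Matrix.empty_val', Matrix.cons_val_fin_one,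
        Matrix.zero_apply, smul_eq_mul, Matrix.vecMul, dotProduct,
        Matrix.one_apply_eq, Matrix.one_apply_ne]
      try simp only [pw8, pw4, pw2, mul_add, add_mul, mul_sub, sub_mul, sub_eq_add_neg,
        neg_add, mul_neg, neg_mul, neg_neg, mul_one, one_mul, mul_assoc]
      try simp only [SWt (↑w : R) (↑s : R) (hw (↑s : R)), (hw (↑s : R)).symm, SWt (↑w : R) (↑s⁻¹ : R) (hw (↑s⁻¹ : R)), (hw (↑s⁻¹ : R)).symm, SWt (↑w : R) astar (hw astar), (hw astar).symm, SWt (↑w : R) a (hw a), (hw a).symm, SWt (↑w : R) (↑κ : R) (hw (↑κ : R)), (hw (↑κ : R)).symm, SWt (↑w : R) (↑κ⁻¹ : R) (hw (↑κ⁻¹ : R)), (hw (↑κ⁻¹ : R)).symm, SWt (↑w⁻¹ : R) (↑s : R) (hwi (↑s : R)), (hwi (↑s : R)).symm, SWt (↑w⁻¹ : R) (↑s⁻¹ : R) (hwi (↑s⁻¹ : R)), (hwi (↑s⁻¹ : R)).symm, SWt (↑w⁻¹ : R) astar (hwi astar), (hwi astar).symm, SWt (↑w⁻¹ : R) a (hwi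 a), (hwi a).symm, SWt (↑w⁻¹ : R) (↑κ : R) (hwi (↑κ : R)), (hwi (↑κ : R)).symm, SWt (↑w⁻¹ : R) (↑κ⁻¹ : R) (hwi (↑κ⁻¹ : R)), (hwi (↑κ⁻¹ : R)).symm, SWt (↑s : R) astar (hs astar), (hs astar).symm, SWt (↑s : R) a (hs a), (hs a).symm, SWt (↑s : R) (↑κ : R) (hs (↑κ : R)), (hs (↑κ : R)).symm, SWt (↑s : R) (↑κ⁻¹ : R) (hs (↑κ⁻¹ : R)), (hs (↑κ⁻¹ : R)).symm, SWt (↑s⁻¹ : R) astar (hsi astar), (hsi astar).symm, SWt (↑s⁻¹ : R) a (hsi a), (hsi a).symm, SWt (↑s⁻¹ : R) (↑κ : R) (hsi (↑κ : R)), (hsi (↑κ : R)).symm, SWt (↑s⁻¹ : R) (↑κ⁻¹ : R) (hsi (↑κ⁻¹ : R)), (hsi (↑κ⁻¹ : R)).symm, iSWt, iSW, Units.inv_mul_cancel_left, Units.mul_inv_cancel_left, Units.inv_mul, Units.mul_inv, hk1t, hk1b, hk2t, hk2b, hk3t, hk3b, hk4t, hk4b, h3t, h3b, h4t, h4b, mul_add,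 add_mul, neg_add, one_mul, mul_one, neg_neg, mul_neg, neg_mul, mul_zero, zero_mul, add_zero, zero_add, mul_assoc]
      try abel
  ext ⟨i,j⟩ ⟨k,l⟩
  exact key i j k l
end

section
/- Crossing relation for the q-oscillator L-operator with the antisymmetrizer: on ℂ²_j ⊗ ℂ²_{j̄} (i.e. as 4×4 matrices over R), 𝒫⁻ · L⁺_{A,j}(ζq⁻¹) · L⁺_{A,j̄}(ζ) = (ζ − ζ⁻¹) · 𝒫⁻, where 𝒫⁻ := ½(1 − P) is the antisymmetrizer (P the flip of the two ℂ² factors), L⁺_{A,j}(x) := L⁺(x) ⊗ 1₂ and L⁺_{A,j̄}(x) := 1₂ ⊗ L⁺(x), the R-valued entries being multiplied in R. -/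
open Matrix Kronecker

/-- The flip (permutation) matrix `P` of the two `ℂ²` factors, with entries in `R`. -/
def flipM (R : Type*) [Ring R] : Matrix (Fin 2 × Fin 2) (Fin 2 × Fin 2) R := fun p p' =>
  if p.1 = p'.2 ∧ p.2 = p'.1 then 1 else 0

/-- The antisymmetrizer `𝒫⁻ = ½(1 − P)`. -/
noncomputable def antiSym (R : Type*) [Ring R] [Algebra ℂ R] :
    Matrix (Fin 2 × Fin 2) (Fin 2 × Fin 2) R :=
  ((1 : ℂ) / 2) • ((1 : Matrix (Fin 2 × Fin 2) (Fin 2 × Fin 2) R) - flipM R)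

set_option maxHeartbeats 3000000 in
/-- Crossing relation with the antisymmetrizer:
`𝒫⁻ ⬝ L⁺_{A,j}(ζq⁻¹) ⬝ L⁺_{A,j̄}(ζ) = (ζ − ζ⁻¹) 𝒫⁻` on `ℂ²_j ⊗ ℂ²_j̄`, where
`L⁺_{A,j}(x) = L⁺(x) ⊗ 1₂` and `L⁺_{A,j̄}(x) = 1₂ ⊗ L⁺(x)`;
`ζ = w²`, `(ζq⁻¹)^{1/2} = w s⁻²`. -/
theorem antisym_crossing (R : Type*) [Ring R] [Algebra ℂ R] (s w κ : Rˣ) (a astar : R)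
    (hs : ∀ x : R, ↑s * x = x * ↑s)
    (hw : ∀ x : R, ↑w * x = x * ↑w)
    (h1 : ↑κ * astar = ↑s ^ 4 * (astar * ↑κ))
    (h2 : ↑κ * a = ↑s⁻¹ ^ 4 * (a * ↑κ))
    (h3 : astar * a = 1 - ↑κ ^ 2)
    (h4 : a * astar = 1 - ↑s ^ 8 * ↑κ ^ 2) :
    antiSym R * (Lp R s κ a astar (w * s⁻¹ ^ 2) ⊗ₖ (1 : Matrix (Fin 2) (Fin 2) R)) *
        ((1 : Matrix (Fin 2) (Fin 2) R) ⊗ₖ Lp R s κ a astar w) =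
      ((↑w : R) ^ 2 - (↑w⁻¹ : R) ^ 2) • antiSym R := by
  have hsi : ∀ x : R, ↑s⁻¹ * x = x * ↑s⁻¹ := fun x => by
    calc (↑s⁻¹ : R) * x = ↑s⁻¹ * x * (↑s * ↑s⁻¹) := by rw [Units.mul_inv, mul_one]
    _ = ↑s⁻¹ * (x * ↑s) * ↑s⁻¹ := by noncomm_ring
    _ = ↑s⁻¹ * (↑s * x) * ↑s⁻¹ := by rw [← hs]
    _ = x * ↑s⁻¹ := by rw [← mul_assoc, Units.inv_mul, one_mul]
  have hwi : ∀ x : R, ↑w⁻¹ * x = x * ↑w⁻¹ := fun x => by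
    calc (↑w⁻¹ : R) * x = ↑w⁻¹ * x * (↑w * ↑w⁻¹) := by rw [Units.mul_inv, mul_one]
    _ = ↑w⁻¹ * (x * ↑w) * ↑w⁻¹ := by noncomm_ring
    _ = ↑w⁻¹ * (↑w * x) * ↑w⁻¹ := by rw [← hw]
    _ = x * ↑w⁻¹ := by rw [← mul_assoc, Units.inv_mul, one_mul]
  have TWS : (↑s : R) * (↑w : R) = (↑w : R) * (↑s : R) := (hw (↑s : R)).symm
  have LWS : ∀ y : R, (↑s : R) * ((↑w : R) * y) = (↑w : R) * ((↑s : R) * y) := fun y => by rw [← mul_assoc, ← hw, mul_assoc]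
  have TWiS : (↑s : R) * (↑w⁻¹ : R) = (↑w⁻¹ : R) * (↑s : R) := (hwi (↑s : R)).symm
  have LWiS : ∀ y : R, (↑s : R) * ((↑w⁻¹ : R) * y) = (↑w⁻¹ : R) * ((↑s : R) * y) := fun y => by rw [← mul_assoc, ← hwi, mul_assoc]
  have TWSi : (↑s⁻¹ : R) * (↑w : R) = (↑w : R) * (↑s⁻¹ : R) := (hw (↑s⁻¹ : R)).symm
  have LWSi : ∀ y : R, (↑s⁻¹ : R) * ((↑w : R) * y) = (↑w : R) * ((↑s⁻¹ : R) * y) := fun y => by rw [← mul_assoc, ← hw, mul_assoc]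
  have TWiSi : (↑s⁻¹ : R) * (↑w⁻¹ : R) = (↑w⁻¹ : R) * (↑s⁻¹ : R) := (hwi (↑s⁻¹ : R)).symm
  have LWiSi : ∀ y : R, (↑s⁻¹ : R) * ((↑w⁻¹ : R) * y) = (↑w⁻¹ : R) * ((↑s⁻¹ : R) * y) := fun y => by rw [← mul_assoc, ← hwi, mul_assoc]
  have TSA : a * (↑s : R) = (↑s : R) * a := (hs a).symm
  have LSA : ∀ y : R, a * ((↑s : R) * y) = (↑s : R) * (a * y) := fun y => by rw [← mul_assoc, ← hs, mul_assoc]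
  have TSiA : a * (↑s⁻¹ : R) = (↑s⁻¹ : R) * a := (hsi a).symm
  have LSiA : ∀ y : R, a * ((↑s⁻¹ : R) * y) = (↑s⁻¹ : R) * (a * y) := fun y => by rw [← mul_assoc, ← hsi, mul_assoc]
  have TWA : a * (↑w : R) = (↑w : R) * a := (hw a).symm
  have LWA : ∀ y : R, a * ((↑w : R) * y) = (↑w : R) * (a * y) := fun y => by rw [← mul_assoc, ← hw, mul_assoc]
  have TWiA : a * (↑w⁻¹ : R) = (↑w⁻¹ : R) * a := (hwi a).symm
  have LWiA : ∀ y : R, a * ((↑w⁻¹ : R) * y) = (↑w⁻¹ : R) * (a * y) := fun y => by rw [← mul_assoc, ← hwi, mul_assoc]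
  have TSB : astar * (↑s : R) = (↑s : R) * astar := (hs astar).symm
  have LSB : ∀ y : R, astar * ((↑s : R) * y) = (↑s : R) * (astar * y) := fun y => by rw [← mul_assoc, ← hs, mul_assoc]
  have TSiB : astar * (↑s⁻¹ : R) = (↑s⁻¹ : R) * astar := (hsi astar).symm
  have LSiB : ∀ y : R, astar * ((↑s⁻¹ : R) * y) = (↑s⁻¹ : R) * (astar * y) := fun y => by rw [← mul_assoc, ← hsi, mul_assoc]
  have TWB : astar * (↑w : R) = (↑w : R) * astar := (hw astar).symm
  have LWB : ∀ y : R, astar * ((↑w : R) * y) = (↑w : R) * (astar * y) := fun y => by rw [← mul_assoc, ← hw, mul_assoc]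
  have TWiB : astar * (↑w⁻¹ : R) = (↑w⁻¹ : R) * astar := (hwi astar).symm
  have LWiB : ∀ y : R, astar * ((↑w⁻¹ : R) * y) = (↑w⁻¹ : R) * (astar * y) := fun y => by rw [← mul_assoc, ← hwi, mul_assoc]
  have TSK : (↑κ : R) * (↑s : R) = (↑s : R) * (↑κ : R) := (hs (↑κ : R)).symm
  have LSK : ∀ y : R, (↑κ : R) * ((↑s : R) * y) = (↑s : R) * ((↑κ : R) * y) := fun y => by rw [← mul_assoc, ← hs, mul_assoc]
  have TSiK : (↑κ : R) * (↑s⁻¹ : R) = (↑s⁻¹ : R) * (↑κ : R) := (hsi (↑κ : R)).symm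
  have LSiK : ∀ y : R, (↑κ : R) * ((↑s⁻¹ : R) * y) = (↑s⁻¹ : R) * ((↑κ : R) * y) := fun y => by rw [← mul_assoc, ← hsi, mul_assoc]
  have TWK : (↑κ : R) * (↑w : R) = (↑w : R) * (↑κ : R) := (hw (↑κ : R)).symm
  have LWK : ∀ y : R, (↑κ : R) * ((↑w : R) * y) = (↑w : R) * ((↑κ : R) * y) := fun y => by rw [← mul_assoc, ← hw, mul_assoc]
  have TWiK : (↑κ : R) * (↑w⁻¹ : R) = (↑w⁻¹ : R) * (↑κ : R) := (hwi (↑κ : R)).symm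
  have LWiK : ∀ y : R, (↑κ : R) * ((↑w⁻¹ : R) * y) = (↑w⁻¹ : R) * ((↑κ : R) * y) := fun y => by rw [← mul_assoc, ← hwi, mul_assoc]
  have TSKi : (↑κ⁻¹ : R) * (↑s : R) = (↑s : R) * (↑κ⁻¹ : R) := (hs (↑κ⁻¹ : R)).symm
  have LSKi : ∀ y : R, (↑κ⁻¹ : R) * ((↑s : R) * y) = (↑s : R) * ((↑κ⁻¹ : R) * y) := fun y => by rw [← mul_assoc, ← hs, mul_assoc]
  have TSiKi : (↑κ⁻¹ : R) * (↑s⁻¹ : R) = (↑s⁻¹ : R) * (↑κ⁻¹ : R) := (hsi (↑κ⁻¹ : R)).symm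
  have LSiKi : ∀ y : R, (↑κ⁻¹ : R) * ((↑s⁻¹ : R) * y) = (↑s⁻¹ : R) * ((↑κ⁻¹ : R) * y) := fun y => by rw [← mul_assoc, ← hsi, mul_assoc]
  have TWKi : (↑κ⁻¹ : R) * (↑w : R) = (↑w : R) * (↑κ⁻¹ : R) := (hw (↑κ⁻¹ : R)).symm
  have LWKi : ∀ y : R, (↑κ⁻¹ : R) * ((↑w : R) * y) = (↑w : R) * ((↑κ⁻¹ : R) * y) := fun y => by rw [← mul_assoc, ← hw, mul_assoc]
  have TWiKi : (↑κ⁻¹ : R) * (↑w⁻¹ : R) = (↑w⁻¹ : R) * (↑κ⁻¹ : R) := (hwi (↑κ⁻¹ : R)).symm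
  have LWiKi : ∀ y : R, (↑κ⁻¹ : R) * ((↑w⁻¹ : R) * y) = (↑w⁻¹ : R) * ((↑κ⁻¹ : R) * y) := fun y => by rw [← mul_assoc, ← hwi, mul_assoc]
  have TMS : ∀ z : ℂ, (↑s : R) * algebraMap ℂ R z = algebraMap ℂ R z * (↑s : R) := fun z => (Algebra.commutes z (↑s : R)).symm
  have LMS : ∀ (z : ℂ) (y : R), (↑s : R) * (algebraMap ℂ R z * y) = algebraMap ℂ R z * ((↑s : R) * y) := fun z y => by rw [← mul_assoc, ← Algebra.commutes, mul_assoc]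
  have TMSi : ∀ z : ℂ, (↑s⁻¹ : R) * algebraMap ℂ R z = algebraMap ℂ R z * (↑s⁻¹ : R) := fun z => (Algebra.commutes z (↑s⁻¹ : R)).symm
  have LMSi : ∀ (z : ℂ) (y : R), (↑s⁻¹ : R) * (algebraMap ℂ R z * y) = algebraMap ℂ R z * ((↑s⁻¹ : R) * y) := fun z y => by rw [← mul_assoc, ← Algebra.commutes, mul_assoc]
  have TMW : ∀ z : ℂ, (↑w : R) * algebraMap ℂ R z = algebraMap ℂ R z * (↑w : R) := fun z => (Algebra.commutes z (↑w : R)).symm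
  have LMW : ∀ (z : ℂ) (y : R), (↑w : R) * (algebraMap ℂ R z * y) = algebraMap ℂ R z * ((↑w : R) * y) := fun z y => by rw [← mul_assoc, ← Algebra.commutes, mul_assoc]
  have TMWi : ∀ z : ℂ, (↑w⁻¹ : R) * algebraMap ℂ R z = algebraMap ℂ R z * (↑w⁻¹ : R) := fun z => (Algebra.commutes z (↑w⁻¹ : R)).symm
  have LMWi : ∀ (z : ℂ) (y : R), (↑w⁻¹ : R) * (algebraMap ℂ R z * y) = algebraMap ℂ R z * ((↑w⁻¹ : R) * y) := fun z y => by rw [← mul_assoc, ← Algebra.commutes, mul_assoc]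
  have TMA : ∀ z : ℂ, a * algebraMap ℂ R z = algebraMap ℂ R z * a := fun z => (Algebra.commutes z a).symm
  have LMA : ∀ (z : ℂ) (y : R), a * (algebraMap ℂ R z * y) = algebraMap ℂ R z * (a * y) := fun z y => by rw [← mul_assoc, ← Algebra.commutes, mul_assoc]
  have TMB : ∀ z : ℂ, astar * algebraMap ℂ R z = algebraMap ℂ R z * astar := fun z => (Algebra.commutes z astar).symm
  have LMB : ∀ (z : ℂ) (y : R), astar * (algebraMap ℂ R z * y) = algebraMap ℂ R z * (astar * y) := fun z y => by rw [← mul_assoc, ← Algebra.commutes, mul_assoc]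
  have TMK : ∀ z : ℂ, (↑κ : R) * algebraMap ℂ R z = algebraMap ℂ R z * (↑κ : R) := fun z => (Algebra.commutes z (↑κ : R)).symm
  have LMK : ∀ (z : ℂ) (y : R), (↑κ : R) * (algebraMap ℂ R z * y) = algebraMap ℂ R z * ((↑κ : R) * y) := fun z y => by rw [← mul_assoc, ← Algebra.commutes, mul_assoc]
  have TMKi : ∀ z : ℂ, (↑κ⁻¹ : R) * algebraMap ℂ R z = algebraMap ℂ R z * (↑κ⁻¹ : R) := fun z => (Algebra.commutes z (↑κ⁻¹ : R)).symm
  have LMKi : ∀ (z : ℂ) (y : R), (↑κ⁻¹ : R) * (algebraMap ℂ R z * y) = algebraMap ℂ R z * ((↑κ⁻¹ : R) * y) := fun z y => by rw [← mul_assoc, ← Algebra.commutes, mul_assoc]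
  have LMM : ∀ (z z' : ℂ) (y : R), algebraMap ℂ R z * (algebraMap ℂ R z' * y) = algebraMap ℂ R (z * z') * y := fun z z' y => by rw [← mul_assoc, ← _root_.map_mul]
  have TMM : ∀ (z z' : ℂ), algebraMap ℂ R z * algebraMap ℂ R z' = algebraMap ℂ R (z * z') := fun z z' => by rw [← _root_.map_mul]
  have hss1 : (↑s⁻¹ : R) ^ 4 * (↑s : R) ^ 4 = 1 := by
    rw [← Units.val_pow_eq_pow_val, ← Units.val_pow_eq_pow_val, ← Units.val_mul, inv_pow, inv_mul_cancel, Units.val_one]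
  have hss2 : (↑s : R) ^ 4 * (↑s⁻¹ : R) ^ 4 = 1 := by
    rw [← Units.val_pow_eq_pow_val, ← Units.val_pow_eq_pow_val, ← Units.val_mul, inv_pow, mul_inv_cancel, Units.val_one]
  have Cs4i : ∀ x : R, (↑s⁻¹ : R) ^ 4 * x = x * (↑s⁻¹ : R) ^ 4 := fun x =>
    (Commute.pow_left (hsi x : Commute (↑s⁻¹ : R) x) 4)
  have Cs4 : ∀ x : R, (↑s : R) ^ 4 * x = x * (↑s : R) ^ 4 := fun x =>
    (Commute.pow_left (hs x : Commute (↑s : R) x) 4)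
  have hBK : astar * ↑κ = (↑s⁻¹ : R) ^ 4 * (↑κ * astar) := by
    rw [h1, ← mul_assoc, hss1, one_mul]
  have hAK : a * ↑κ = (↑s : R) ^ 4 * (↑κ * a) := by
    rw [h2, ← mul_assoc, hss2, one_mul]
  have h1i : (↑κ⁻¹ : R) * astar = ↑s⁻¹ ^ 4 * (astar * ↑κ⁻¹) := by
    calc (↑κ⁻¹ : R) * astar = ↑κ⁻¹ * (astar * ↑κ * ↑κ⁻¹) := by rw [Units.mul_inv_cancel_right]
    _ = ↑κ⁻¹ * (↑s⁻¹ ^ 4 * (↑κ * astar) * ↑κ⁻¹) := by rw [hBK]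
    _ = ↑s⁻¹ ^ 4 * ↑κ⁻¹ * (↑κ * (astar * ↑κ⁻¹)) := by
        rw [mul_assoc (↑s⁻¹ ^ 4 : R), ← mul_assoc (↑κ⁻¹ : R), ← Cs4i, mul_assoc, mul_assoc,
          mul_assoc]
    _ = ↑s⁻¹ ^ 4 * (astar * ↑κ⁻¹) := by rw [mul_assoc, Units.inv_mul_cancel_left]
  have h2i : (↑κ⁻¹ : R) * a = ↑s ^ 4 * (a * ↑κ⁻¹) := by
    calc (↑κ⁻¹ : R) * a = ↑κ⁻¹ * (a * ↑κ * ↑κ⁻¹) := by rw [Units.mul_inv_cancel_right]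
    _ = ↑κ⁻¹ * (↑s ^ 4 * (↑κ * a) * ↑κ⁻¹) := by rw [hAK]
    _ = ↑s ^ 4 * ↑κ⁻¹ * (↑κ * (a * ↑κ⁻¹)) := by
        rw [mul_assoc (↑s ^ 4 : R), ← mul_assoc (↑κ⁻¹ : R), ← Cs4, mul_assoc, mul_assoc,
          mul_assoc]
    _ = ↑s ^ 4 * (a * ↑κ⁻¹) := by rw [mul_assoc, Units.inv_mul_cancel_left]
  have h1L : ∀ y : R, ↑κ * (astar * y) = ↑s ^ 4 * (astar * (↑κ * y)) := fun y => by
    rw [← mul_assoc, h1, mul_assoc, mul_assoc]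
  have h2L : ∀ y : R, ↑κ * (a * y) = ↑s⁻¹ ^ 4 * (a * (↑κ * y)) := fun y => by
    rw [← mul_assoc, h2, mul_assoc, mul_assoc]
  have h1iL : ∀ y : R, ↑κ⁻¹ * (astar * y) = ↑s⁻¹ ^ 4 * (astar * (↑κ⁻¹ * y)) := fun y => by
    rw [← mul_assoc, h1i, mul_assoc, mul_assoc]
  have h2iL : ∀ y : R, ↑κ⁻¹ * (a * y) = ↑s ^ 4 * (a * (↑κ⁻¹ * y)) := fun y => by
    rw [← mul_assoc, h2i, mul_assoc, mul_assoc]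
  have h3L : ∀ y : R, astar * (a * y) = y - ↑κ * (↑κ * y) := fun y => by
    rw [← mul_assoc, h3, sub_mul, one_mul, sq, mul_assoc]
  have h4L : ∀ y : R, a * (astar * y) = y - ↑s ^ 8 * (↑κ * (↑κ * y)) := fun y => by
    rw [← mul_assoc, h4, sub_mul, one_mul, mul_assoc, sq, mul_assoc]
  ext ⟨i, j⟩ ⟨k, l⟩
  simp only [antiSym, flipM, Lp, Matrix.mul_fin_two, Matrix.mul_apply, Matrix.smul_apply,
    Matrix.sub_apply, Matrix.one_apply, Matrix.kroneckerMap_apply,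
    Fintype.sum_prod_type, Fin.sum_univ_two]
  fin_cases i <;> fin_cases j <;> fin_cases k <;> fin_cases l <;>
    simp (config := { decide := true }) [Matrix.cons_val_zero, Matrix.cons_val_one,
      Matrix.head_cons, Matrix.head_fin_const] <;>
    try simp only [TWS, LWS, TWiS, LWiS, TWSi, LWSi, TWiSi, LWiSi, TSA, LSA, TSiA, LSiA, TWA, LWA, TWiA, LWiA, TSB, LSB, TSiB, LSiB, TWB, LWB, TWiB, LWiB, TSK, LSK, TSiK, LSiK, TWK, LWK, TWiK, LWiK, TSKi, LSKi, TSiKi, LSiKi, TWKi, LWKi, TWiKi, LWiKi, TMS, LMS, TMSi, LMSi, TMW, LMW, TMWi, LMWi, TMA, LMA, TMB, LMB, TMK, LMK, TMKi, LMKi, LMM, TMM,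
      _root_.mul_inv_rev, Units.val_mul, Units.val_pow_eq_pow_val, inv_one, Units.val_one,
      inv_inv, pow_succ', pow_zero, one_mul, mul_one, mul_assoc, mul_sub, sub_mul, mul_neg,
      neg_mul, neg_neg, smul_zero, zero_add, add_zero, smul_add, smul_sub, smul_neg,
      h1, h2, h1i, h2i, h1L, h2L, h1iL, h2iL, h3, h4, h3L, h4L,
      Units.mul_inv_cancel_left, Units.inv_mul_cancel_left, Units.mul_inv, Units.inv_mul,
      Complex.I_mul_I, map_neg, _root_.map_one]
  all_goals abel
end

section
/- Shift identity for the q-oscillator L-operator: L⁺(ζq) · σ⁺ · (q^{1/2} κ⁻² · 1₂) = (q^{−1/2} κ⁻² · 1₂) · L⁺(ζq⁻¹) · σ⁺ as 2×2 matrices over R (this is the relation L⁺_{A,j}(ζq) σ_j⁺ q^{−2D_A + 1/2} = q^{−2D_A − 1/2} L⁺_{A,j}(ζq⁻¹) σ_j⁺, since q^{2D} = κ²). -/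
open Matrix

private theorem mix' {R : Type*} [Ring R] : ∀ u v : R, u * v = v * u →
    ∀ x : R, u * (v * x) = v * (u * x) := fun u v h x => by
  rw [← mul_assoc, h, mul_assoc]

set_option maxHeartbeats 2000000 in
/-- Shift identity for the q-oscillator L-operator:
`L⁺(ζq) σ⁺ (q^{1/2}κ⁻² 1₂) = (q^{−1/2}κ⁻² 1₂) L⁺(ζq⁻¹) σ⁺`,
i.e. `L⁺_{A,j}(ζq) σ⁺_j q^{−2D_A+1/2} = q^{−2D_A−1/2} L⁺_{A,j}(ζq⁻¹) σ⁺_j`;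
here `ζ = w²`, `(ζq)^{1/2} = w s²`, `(ζq⁻¹)^{1/2} = w s⁻²`, `κ = q^D`. -/
theorem shift_identity (R : Type*) [Ring R] [Algebra ℂ R] (s w κ : Rˣ) (a astar : R)
    (hs : ∀ x : R, ↑s * x = x * ↑s)
    (hw : ∀ x : R, ↑w * x = x * ↑w)
    (h1 : ↑κ * astar = ↑s ^ 4 * (astar * ↑κ))
    (h2 : ↑κ * a = ↑s⁻¹ ^ 4 * (a * ↑κ))
    (h3 : astar * a = 1 - ↑κ ^ 2)
    (h4 : a * astar = 1 - ↑s ^ 8 * ↑κ ^ 2) :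
    Lp R s κ a astar (w * s ^ 2) * !![(0 : R), 1; 0, 0] *
        (((↑s : R) ^ 2 * (↑κ⁻¹ : R) ^ 2) • (1 : Matrix (Fin 2) (Fin 2) R)) =
      (((↑s⁻¹ : R) ^ 2 * (↑κ⁻¹ : R) ^ 2) • (1 : Matrix (Fin 2) (Fin 2) R)) *
        Lp R s κ a astar (w * s⁻¹ ^ 2) * !![(0 : R), 1; 0, 0] := by
  have mix : ∀ u v : R, u * v = v * u → ∀ x : R, u * (v * x) = v * (u * x) := mix'
  set I : R := algebraMap ℂ R Complex.I with hI
  have hIc : ∀ x : R, I * x = x * I := fun x => Algebra.commutes _ _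
  have hsC : ∀ x : R, Commute (↑s : R) x := hs
  have hwC : ∀ x : R, Commute (↑w : R) x := hw
  have hsi : ∀ x : R, (↑s⁻¹ : R) * x = x * ↑s⁻¹ := fun x => ((hsC x).units_inv_left).eq
  have hwi : ∀ x : R, (↑w⁻¹ : R) * x = x * ↑w⁻¹ := fun x => ((hwC x).units_inv_left).eq
  have r_w_I : (↑w : R) * I = I * (↑w : R) := (hIc (↑w : R)).symm
  have r_w_I3 := mix _ _ r_w_I
  have r_wi_I : (↑w⁻¹ : R) * I = I * (↑w⁻¹ : R) := (hIc (↑w⁻¹ : R)).symm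
  have r_wi_I3 := mix _ _ r_wi_I
  have r_s_I : (↑s : R) * I = I * (↑s : R) := (hIc (↑s : R)).symm
  have r_s_I3 := mix _ _ r_s_I
  have r_si_I : (↑s⁻¹ : R) * I = I * (↑s⁻¹ : R) := (hIc (↑s⁻¹ : R)).symm
  have r_si_I3 := mix _ _ r_si_I
  have r_a_I : a * I = I * a := (hIc a).symm
  have r_a_I3 := mix _ _ r_a_I
  have r_k_I : (↑κ : R) * I = I * (↑κ : R) := (hIc (↑κ : R)).symm
  have r_k_I3 := mix _ _ r_k_I
  have r_ki_I : (↑κ⁻¹ : R) * I = I * (↑κ⁻¹ : R) := (hIc (↑κ⁻¹ : R)).symm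
  have r_ki_I3 := mix _ _ r_ki_I
  have r_s_w : (↑s : R) * (↑w : R) = (↑w : R) * (↑s : R) := (hw (↑s : R)).symm
  have r_s_w3 := mix _ _ r_s_w
  have r_s_wi : (↑s : R) * (↑w⁻¹ : R) = (↑w⁻¹ : R) * (↑s : R) := (hwi (↑s : R)).symm
  have r_s_wi3 := mix _ _ r_s_wi
  have r_si_w : (↑s⁻¹ : R) * (↑w : R) = (↑w : R) * (↑s⁻¹ : R) := (hw (↑s⁻¹ : R)).symm
  have r_si_w3 := mix _ _ r_si_w
  have r_si_wi : (↑s⁻¹ : R) * (↑w⁻¹ : R) = (↑w⁻¹ : R) * (↑s⁻¹ : R) := (hwi (↑s⁻¹ : R)).symm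
  have r_si_wi3 := mix _ _ r_si_wi
  have r_a_w : a * (↑w : R) = (↑w : R) * a := (hw a).symm
  have r_a_w3 := mix _ _ r_a_w
  have r_a_wi : a * (↑w⁻¹ : R) = (↑w⁻¹ : R) * a := (hwi a).symm
  have r_a_wi3 := mix _ _ r_a_wi
  have r_a_s : a * (↑s : R) = (↑s : R) * a := (hs a).symm
  have r_a_s3 := mix _ _ r_a_s
  have r_a_si : a * (↑s⁻¹ : R) = (↑s⁻¹ : R) * a := (hsi a).symm
  have r_a_si3 := mix _ _ r_a_si
  have r_k_w : (↑κ : R) * (↑w : R) = (↑w : R) * (↑κ : R) := (hw (↑κ : R)).symm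
  have r_k_w3 := mix _ _ r_k_w
  have r_k_wi : (↑κ : R) * (↑w⁻¹ : R) = (↑w⁻¹ : R) * (↑κ : R) := (hwi (↑κ : R)).symm
  have r_k_wi3 := mix _ _ r_k_wi
  have r_k_s : (↑κ : R) * (↑s : R) = (↑s : R) * (↑κ : R) := (hs (↑κ : R)).symm
  have r_k_s3 := mix _ _ r_k_s
  have r_k_si : (↑κ : R) * (↑s⁻¹ : R) = (↑s⁻¹ : R) * (↑κ : R) := (hsi (↑κ : R)).symm
  have r_k_si3 := mix _ _ r_k_si
  have r_ki_w : (↑κ⁻¹ : R) * (↑w : R) = (↑w : R) * (↑κ⁻¹ : R) := (hw (↑κ⁻¹ : R)).symm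
  have r_ki_w3 := mix _ _ r_ki_w
  have r_ki_wi : (↑κ⁻¹ : R) * (↑w⁻¹ : R) = (↑w⁻¹ : R) * (↑κ⁻¹ : R) := (hwi (↑κ⁻¹ : R)).symm
  have r_ki_wi3 := mix _ _ r_ki_wi
  have r_ki_s : (↑κ⁻¹ : R) * (↑s : R) = (↑s : R) * (↑κ⁻¹ : R) := (hs (↑κ⁻¹ : R)).symm
  have r_ki_s3 := mix _ _ r_ki_s
  have r_ki_si : (↑κ⁻¹ : R) * (↑s⁻¹ : R) = (↑s⁻¹ : R) * (↑κ⁻¹ : R) := (hsi (↑κ⁻¹ : R)).symm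
  have r_ki_si3 := mix _ _ r_ki_si
  have hs4 : (↑s : R) ^ 4 * (↑s⁻¹ : R) ^ 4 = 1 := by
    rw [← Units.val_pow_eq_pow_val, ← Units.val_pow_eq_pow_val, ← Units.val_mul, inv_pow,
      mul_inv_cancel, Units.val_one]
  have h2t : ∀ x : R, (↑κ : R) * (a * x) = (↑s⁻¹ : R) ^ 4 * (a * ((↑κ : R) * x)) := fun x => by
    rw [← mul_assoc, h2, mul_assoc, mul_assoc]
  have h2' : (↑κ⁻¹ : R) * a = (↑s : R) ^ 4 * (a * (↑κ⁻¹ : R)) := by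
    rw [← Units.mul_right_inj κ]
    simp only [pow_succ, pow_zero, one_mul, mul_one, mul_assoc, r_k_s3, h2t,
      Units.mul_inv_cancel_left, Units.mul_inv]
  have h2't : ∀ x : R, (↑κ⁻¹ : R) * (a * x) = (↑s : R) ^ 4 * (a * ((↑κ⁻¹ : R) * x)) := fun x => by
    rw [← mul_assoc, h2', mul_assoc, mul_assoc]
  have vs2 : (↑(s ^ 2)⁻¹ : R) = ↑s⁻¹ * ↑s⁻¹ := by
    rw [← inv_pow, Units.val_pow_eq_pow_val, sq]
  unfold Lp
  ext i j
  fin_cases i <;> fin_cases j <;>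
    simp only [Matrix.mul_apply, Fin.sum_univ_succ, Matrix.smul_apply, Matrix.one_apply,
      Fin.sum_univ_zero, Matrix.cons_val_zero, Matrix.cons_val_one, Matrix.head_cons,
      Matrix.head_fin_const, smul_eq_mul, ← hI] <;>
    simp [vs2, pow_succ, pow_zero, one_mul, mul_one, mul_assoc, h2, h2t, h2', h2't,
      Units.mul_inv_cancel_left, Units.inv_mul_cancel_left, Units.mul_inv, Units.inv_mul,
      r_w_I, r_w_I3, r_wi_I, r_wi_I3, r_s_I, r_s_I3, r_si_I, r_si_I3, r_a_I, r_a_I3, r_k_I, r_k_I3, r_ki_I, r_ki_I3, r_s_w, r_s_w3, r_s_wi, r_s_wi3, r_si_w, r_si_w3, r_si_wi, r_si_wi3, r_a_w, r_a_w3, r_a_wi, r_a_wi3, r_a_s, r_a_s3, r_a_si, r_a_si3, r_k_w, r_k_w3, r_k_wi, r_k_wi3, r_k_s, r_k_s3, r_k_si, r_k_si3, r_ki_w, r_ki_w3, r_ki_wi, r_ki_wi3, r_ki_s, r_ki_s3, r_ki_si, r_ki_si3]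
end

section
/- RLL relation for the quantum-group L-operator: for invertible central elements ζ₁, ζ₂ of R, one has R(ζ₁/ζ₂) · L_a(ζ₁) · L_b(ζ₂) = L_b(ζ₂) · L_a(ζ₁) · R(ζ₁/ζ₂) as 4×4 matrices over R, where L_a(x) := L(x) ⊗ 1₂, L_b(x) := 1₂ ⊗ L(x) (R-valued entries multiplied in R), and R(x) is the six-vertex R-matrix. -/
open Matrix Kronecker

/-- The image of the universal L-operator of `U_q(ŝl₂)` at spectral parameter `x`
(a central unit of `R`): here `sh = q^{1/2}`, `k = q^{H/2}`, and `e`, `f` are the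
Chevalley-type generators. -/
def Lqg (R : Type*) [Ring R] (sh k : Rˣ) (e f : R) (x : Rˣ) :
    Matrix (Fin 2) (Fin 2) R :=
  !![(↑x : R) * ↑sh * ↑k - (↑x⁻¹ : R) * ↑sh⁻¹ * ↑k⁻¹,
      ((↑sh : R) ^ 2 - (↑sh⁻¹ : R) ^ 2) * f * ↑k * ↑sh⁻¹;
    ((↑sh : R) ^ 2 - (↑sh⁻¹ : R) ^ 2) * ↑sh * ↑k⁻¹ * e,
      (↑x : R) * ↑sh * ↑k⁻¹ - (↑x⁻¹ : R) * ↑sh⁻¹ * ↑k]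

set_option maxHeartbeats 1600000000 in
/-- RLL relation for the quantum-group L-operator:
`R(ζ₁/ζ₂) ⬝ L_a(ζ₁) ⬝ L_b(ζ₂) = L_b(ζ₂) ⬝ L_a(ζ₁) ⬝ R(ζ₁/ζ₂)` where
`L_a(x) = L(x) ⊗ 1₂`, `L_b(x) = 1₂ ⊗ L(x)`. -/
theorem RLL_quantum_group (R : Type*) [Ring R] (sh k z₁ z₂ : Rˣ) (e f : R)
    (hsh : ∀ x : R, ↑sh * x = x * ↑sh)
    (hz₁ : ∀ x : R, ↑z₁ * x = x * ↑z₁)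
    (hz₂ : ∀ x : R, ↑z₂ * x = x * ↑z₂)
    (hke : (↑k : R) * e = ↑sh ^ 2 * (e * ↑k))
    (hkf : (↑k : R) * f = ↑sh⁻¹ ^ 2 * (f * ↑k))
    (hqinv : IsUnit ((↑sh : R) ^ 2 - (↑sh⁻¹ : R) ^ 2))
    (hef : ((↑sh : R) ^ 2 - (↑sh⁻¹ : R) ^ 2) * (e * f - f * e) =
      (↑k : R) ^ 2 - (↑k⁻¹ : R) ^ 2) :
    sixV R ((↑(z₁ * z₂⁻¹) : R) * ↑sh ^ 2 - (↑(z₁⁻¹ * z₂) : R) * ↑sh⁻¹ ^ 2)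
        ((↑(z₁ * z₂⁻¹) : R) - (↑(z₁⁻¹ * z₂) : R)) ((↑sh : R) ^ 2 - (↑sh⁻¹ : R) ^ 2) *
        (Lqg R sh k e f z₁ ⊗ₖ (1 : Matrix (Fin 2) (Fin 2) R)) *
        ((1 : Matrix (Fin 2) (Fin 2) R) ⊗ₖ Lqg R sh k e f z₂) =
      ((1 : Matrix (Fin 2) (Fin 2) R) ⊗ₖ Lqg R sh k e f z₂) *
        (Lqg R sh k e f z₁ ⊗ₖ (1 : Matrix (Fin 2) (Fin 2) R)) *
        sixV R ((↑(z₁ * z₂⁻¹) : R) * ↑sh ^ 2 - (↑(z₁⁻¹ * z₂) : R) * ↑sh⁻¹ ^ 2)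
          ((↑(z₁ * z₂⁻¹) : R) - (↑(z₁⁻¹ * z₂) : R)) ((↑sh : R) ^ 2 - (↑sh⁻¹ : R) ^ 2) := by
  -- the computation is long
  -- (set_option below)
  -- helper lemmas for moving central elements around
  have sw : ∀ c x : R, (∀ y, c * y = y * c) → ∀ t, x * (c * t) = c * (x * t) :=
    fun c x h t => by rw [← mul_assoc, ← h, mul_assoc]
  have sw' : ∀ c x : R, (∀ y, c * y = y * c) → x * c = c * x := fun c x h => (h x).symm
  have nest : ∀ w g c : R, w * g = c * (g * w) → ∀ t, w * (g * t) = c * (g * (w * t)) := by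
    intro w g c h t
    rw [← mul_assoc, h, mul_assoc, mul_assoc]
  have cinv : ∀ u : Rˣ, (∀ y : R, ↑u * y = y * ↑u) → ∀ y : R, (↑u⁻¹ : R) * y = y * ↑u⁻¹ := by
    intro u hu y
    calc (↑u⁻¹ : R) * y = ↑u⁻¹ * (y * ↑u * ↑u⁻¹) := by rw [Units.mul_inv_cancel_right]
      _ = ↑u⁻¹ * (↑u * y * ↑u⁻¹) := by rw [← hu]
      _ = y * ↑u⁻¹ := by rw [← mul_assoc, ← mul_assoc, Units.inv_mul, one_mul]
  have hshi := cinv sh hsh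
  have hz₁i := cinv z₁ hz₁
  have hz₂i := cinv z₂ hz₂
  have hs2 : ∀ y : R, (↑sh : R) ^ 2 * y = y * (↑sh : R) ^ 2 := by
    intro y; rw [pow_two, mul_assoc, hsh y, ← mul_assoc, hsh y, mul_assoc]
  have hsi2 : ∀ y : R, (↑sh⁻¹ : R) ^ 2 * y = y * (↑sh⁻¹ : R) ^ 2 := by
    intro y; rw [pow_two, mul_assoc, hshi y, ← mul_assoc, hshi y, mul_assoc]
  have hsis2 : ((↑sh⁻¹ : R)) ^ 2 * ((↑sh : R)) ^ 2 = 1 := by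
    rw [pow_two, pow_two, mul_assoc, Units.inv_mul_cancel_left, Units.inv_mul]
  have hssi2 : ((↑sh : R)) ^ 2 * ((↑sh⁻¹ : R)) ^ 2 = 1 := by
    rw [pow_two, pow_two, mul_assoc, Units.mul_inv_cancel_left, Units.mul_inv]
  have muk : ∀ a b : R, (↑k : R) * a = ↑k * b → a = b := by
    intro a b h
    have h2 := congrArg (fun x => (↑k⁻¹ : R) * x) h
    simp only [Units.inv_mul_cancel_left] at h2
    exact h2
  have hkie : (↑k⁻¹ : R) * e = (↑sh⁻¹ : R) ^ 2 * (e * ↑k⁻¹) := by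
    apply muk
    rw [Units.mul_inv_cancel_left]
    conv_rhs => rw [sw _ _ hsi2, ← mul_assoc (↑k : R) e, hke, mul_assoc ((↑sh : R) ^ 2),
      mul_assoc e, Units.mul_inv, mul_one, ← mul_assoc, hsis2, one_mul]
  have hkif : (↑k⁻¹ : R) * f = (↑sh : R) ^ 2 * (f * ↑k⁻¹) := by
    apply muk
    rw [Units.mul_inv_cancel_left]
    conv_rhs => rw [sw _ _ hs2, ← mul_assoc (↑k : R) f, hkf, mul_assoc ((↑sh⁻¹ : R) ^ 2),
      mul_assoc f, Units.mul_inv, mul_one, ← mul_assoc, hssi2, one_mul]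
  have key : ∀ d : R, d = (↑sh : R) ^ 2 - (↑sh⁻¹ : R) ^ 2 →
      sixV R ((↑(z₁ * z₂⁻¹) : R) * ↑sh ^ 2 - (↑(z₁⁻¹ * z₂) : R) * ↑sh⁻¹ ^ 2)
          ((↑(z₁ * z₂⁻¹) : R) - (↑(z₁⁻¹ * z₂) : R)) d *
          ((!![(↑z₁ : R) * ↑sh * ↑k - (↑z₁⁻¹ : R) * ↑sh⁻¹ * ↑k⁻¹, d * f * ↑k * ↑sh⁻¹;
              d * ↑sh * ↑k⁻¹ * e, (↑z₁ : R) * ↑sh * ↑k⁻¹ - (↑z₁⁻¹ : R) * ↑sh⁻¹ * ↑k] :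
              Matrix (Fin 2) (Fin 2) R) ⊗ₖ (1 : Matrix (Fin 2) (Fin 2) R)) *
          ((1 : Matrix (Fin 2) (Fin 2) R) ⊗ₖ
            (!![(↑z₂ : R) * ↑sh * ↑k - (↑z₂⁻¹ : R) * ↑sh⁻¹ * ↑k⁻¹, d * f * ↑k * ↑sh⁻¹;
              d * ↑sh * ↑k⁻¹ * e, (↑z₂ : R) * ↑sh * ↑k⁻¹ - (↑z₂⁻¹ : R) * ↑sh⁻¹ * ↑k] :
              Matrix (Fin 2) (Fin 2) R)) =
        ((1 : Matrix (Fin 2) (Fin 2) R) ⊗ₖ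
            (!![(↑z₂ : R) * ↑sh * ↑k - (↑z₂⁻¹ : R) * ↑sh⁻¹ * ↑k⁻¹, d * f * ↑k * ↑sh⁻¹;
              d * ↑sh * ↑k⁻¹ * e, (↑z₂ : R) * ↑sh * ↑k⁻¹ - (↑z₂⁻¹ : R) * ↑sh⁻¹ * ↑k] :
              Matrix (Fin 2) (Fin 2) R)) *
          ((!![(↑z₁ : R) * ↑sh * ↑k - (↑z₁⁻¹ : R) * ↑sh⁻¹ * ↑k⁻¹, d * f * ↑k * ↑sh⁻¹;
              d * ↑sh * ↑k⁻¹ * e, (↑z₁ : R) * ↑sh * ↑k⁻¹ - (↑z₁⁻¹ : R) * ↑sh⁻¹ * ↑k] :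
              Matrix (Fin 2) (Fin 2) R) ⊗ₖ (1 : Matrix (Fin 2) (Fin 2) R)) *
          sixV R ((↑(z₁ * z₂⁻¹) : R) * ↑sh ^ 2 - (↑(z₁⁻¹ * z₂) : R) * ↑sh⁻¹ ^ 2)
            ((↑(z₁ * z₂⁻¹) : R) - (↑(z₁⁻¹ * z₂) : R)) d := by
    intro d hd
    have hdc : ∀ y : R, d * y = y * d := by
      intro y; rw [hd, sub_mul, mul_sub, hs2, hsi2]
    have hdef0 : d * (e * f) = ((↑k : R) * ↑k - (↑k⁻¹ : R) * ↑k⁻¹) + d * (f * e) := by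
      have h := hef
      rw [← hd, mul_sub, sub_eq_iff_eq_add, pow_two, pow_two] at h
      exact h
    have hdefT : ∀ t : R, d * (e * (f * t)) =
        ((↑k : R) * (↑k * t) - (↑k⁻¹ : R) * (↑k⁻¹ * t)) + d * (f * (e * t)) := by
      intro t
      have h := congrArg (· * t) hdef0
      simp only [add_mul, sub_mul, mul_assoc] at h
      exact h
    ext ⟨i, j⟩ ⟨i', j'⟩
    fin_cases i <;> fin_cases j <;> fin_cases i' <;> fin_cases j' <;>
      simp [Matrix.mul_apply, Fintype.sum_prod_type, Fin.sum_univ_two, sixV,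
        Matrix.one_fin_two, Units.val_mul, Prod.ext_iff] <;>
simp only [sw (z₁ : R) (z₂ : R) hz₁,
        sw' (z₁ : R) (z₂ : R) hz₁,
        sw (z₁ : R) ((z₂⁻¹ : Rˣ) : R) hz₁,
        sw' (z₁ : R) ((z₂⁻¹ : Rˣ) : R) hz₁,
        sw (z₁ : R) (sh : R) hz₁,
        sw' (z₁ : R) (sh : R) hz₁,
        sw (z₁ : R) ((sh⁻¹ : Rˣ) : R) hz₁,
        sw' (z₁ : R) ((sh⁻¹ : Rˣ) : R) hz₁,
        sw (z₁ : R) d hz₁,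
        sw' (z₁ : R) d hz₁,
        sw (z₁ : R) f hz₁,
        sw' (z₁ : R) f hz₁,
        sw (z₁ : R) e hz₁,
        sw' (z₁ : R) e hz₁,
        sw (z₁ : R) (k : R) hz₁,
        sw' (z₁ : R) (k : R) hz₁,
        sw (z₁ : R) ((k⁻¹ : Rˣ) : R) hz₁,
        sw' (z₁ : R) ((k⁻¹ : Rˣ) : R) hz₁,
        sw ((z₁⁻¹ : Rˣ) : R) (z₂ : R) hz₁i,
        sw' ((z₁⁻¹ : Rˣ) : R) (z₂ : R) hz₁i,
        sw ((z₁⁻¹ : Rˣ) : R) ((z₂⁻¹ : Rˣ) : R) hz₁i,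
        sw' ((z₁⁻¹ : Rˣ) : R) ((z₂⁻¹ : Rˣ) : R) hz₁i,
        sw ((z₁⁻¹ : Rˣ) : R) (sh : R) hz₁i,
        sw' ((z₁⁻¹ : Rˣ) : R) (sh : R) hz₁i,
        sw ((z₁⁻¹ : Rˣ) : R) ((sh⁻¹ : Rˣ) : R) hz₁i,
        sw' ((z₁⁻¹ : Rˣ) : R) ((sh⁻¹ : Rˣ) : R) hz₁i,
        sw ((z₁⁻¹ : Rˣ) : R) d hz₁i,
        sw' ((z₁⁻¹ : Rˣ) : R) d hz₁i,
        sw ((z₁⁻¹ : Rˣ) : R) f hz₁i,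
        sw' ((z₁⁻¹ : Rˣ) : R) f hz₁i,
        sw ((z₁⁻¹ : Rˣ) : R) e hz₁i,
        sw' ((z₁⁻¹ : Rˣ) : R) e hz₁i,
        sw ((z₁⁻¹ : Rˣ) : R) (k : R) hz₁i,
        sw' ((z₁⁻¹ : Rˣ) : R) (k : R) hz₁i,
        sw ((z₁⁻¹ : Rˣ) : R) ((k⁻¹ : Rˣ) : R) hz₁i,
        sw' ((z₁⁻¹ : Rˣ) : R) ((k⁻¹ : Rˣ) : R) hz₁i,
        sw (z₂ : R) (sh : R) hz₂,
        sw' (z₂ : R) (sh : R) hz₂,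
        sw (z₂ : R) ((sh⁻¹ : Rˣ) : R) hz₂,
        sw' (z₂ : R) ((sh⁻¹ : Rˣ) : R) hz₂,
        sw (z₂ : R) d hz₂,
        sw' (z₂ : R) d hz₂,
        sw (z₂ : R) f hz₂,
        sw' (z₂ : R) f hz₂,
        sw (z₂ : R) e hz₂,
        sw' (z₂ : R) e hz₂,
        sw (z₂ : R) (k : R) hz₂,
        sw' (z₂ : R) (k : R) hz₂,
        sw (z₂ : R) ((k⁻¹ : Rˣ) : R) hz₂,
        sw' (z₂ : R) ((k⁻¹ : Rˣ) : R) hz₂,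
        sw ((z₂⁻¹ : Rˣ) : R) (sh : R) hz₂i,
        sw' ((z₂⁻¹ : Rˣ) : R) (sh : R) hz₂i,
        sw ((z₂⁻¹ : Rˣ) : R) ((sh⁻¹ : Rˣ) : R) hz₂i,
        sw' ((z₂⁻¹ : Rˣ) : R) ((sh⁻¹ : Rˣ) : R) hz₂i,
        sw ((z₂⁻¹ : Rˣ) : R) d hz₂i,
        sw' ((z₂⁻¹ : Rˣ) : R) d hz₂i,
        sw ((z₂⁻¹ : Rˣ) : R) f hz₂i,
        sw' ((z₂⁻¹ : Rˣ) : R) f hz₂i,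
        sw ((z₂⁻¹ : Rˣ) : R) e hz₂i,
        sw' ((z₂⁻¹ : Rˣ) : R) e hz₂i,
        sw ((z₂⁻¹ : Rˣ) : R) (k : R) hz₂i,
        sw' ((z₂⁻¹ : Rˣ) : R) (k : R) hz₂i,
        sw ((z₂⁻¹ : Rˣ) : R) ((k⁻¹ : Rˣ) : R) hz₂i,
        sw' ((z₂⁻¹ : Rˣ) : R) ((k⁻¹ : Rˣ) : R) hz₂i,
        sw (sh : R) d hsh,
        sw' (sh : R) d hsh,
        sw (sh : R) f hsh,
        sw' (sh : R) f hsh,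
        sw (sh : R) e hsh,
        sw' (sh : R) e hsh,
        sw (sh : R) (k : R) hsh,
        sw' (sh : R) (k : R) hsh,
        sw (sh : R) ((k⁻¹ : Rˣ) : R) hsh,
        sw' (sh : R) ((k⁻¹ : Rˣ) : R) hsh,
        sw ((sh⁻¹ : Rˣ) : R) d hshi,
        sw' ((sh⁻¹ : Rˣ) : R) d hshi,
        sw ((sh⁻¹ : Rˣ) : R) f hshi,
        sw' ((sh⁻¹ : Rˣ) : R) f hshi,
        sw ((sh⁻¹ : Rˣ) : R) e hshi,
        sw' ((sh⁻¹ : Rˣ) : R) e hshi,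
        sw ((sh⁻¹ : Rˣ) : R) (k : R) hshi,
        sw' ((sh⁻¹ : Rˣ) : R) (k : R) hshi,
        sw ((sh⁻¹ : Rˣ) : R) ((k⁻¹ : Rˣ) : R) hshi,
        sw' ((sh⁻¹ : Rˣ) : R) ((k⁻¹ : Rˣ) : R) hshi,
        sw d f hdc,
        sw' d f hdc,
        sw d e hdc,
        sw' d e hdc,
        sw d (k : R) hdc,
        sw' d (k : R) hdc,
        sw d ((k⁻¹ : Rˣ) : R) hdc,
        sw' d ((k⁻¹ : Rˣ) : R) hdc,
        Units.mul_inv_cancel_left,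
        Units.inv_mul_cancel_left,
        Units.mul_inv,
        Units.inv_mul,
        hke,
        hkf,
        hkie,
        hkif,
        nest _ _ _ hke,
        nest _ _ _ hkf,
        nest _ _ _ hkie,
        nest _ _ _ hkif,
        hdef0,
        hdefT,
        pow_two,
        mul_add,
        add_mul,
        mul_sub,
        sub_mul,
        mul_one,
        one_mul,
        mul_assoc] <;>
      (try simp only [hd,
        sw (z₁ : R) (z₂ : R) hz₁,
        sw' (z₁ : R) (z₂ : R) hz₁,
        sw (z₁ : R) ((z₂⁻¹ : Rˣ) : R) hz₁,
        sw' (z₁ : R) ((z₂⁻¹ : Rˣ) : R) hz₁,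
        sw (z₁ : R) (sh : R) hz₁,
        sw' (z₁ : R) (sh : R) hz₁,
        sw (z₁ : R) ((sh⁻¹ : Rˣ) : R) hz₁,
        sw' (z₁ : R) ((sh⁻¹ : Rˣ) : R) hz₁,
        sw (z₁ : R) d hz₁,
        sw' (z₁ : R) d hz₁,
        sw (z₁ : R) f hz₁,
        sw' (z₁ : R) f hz₁,
        sw (z₁ : R) e hz₁,
        sw' (z₁ : R) e hz₁,
        sw (z₁ : R) (k : R) hz₁,
        sw' (z₁ : R) (k : R) hz₁,
        sw (z₁ : R) ((k⁻¹ : Rˣ) : R) hz₁,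
        sw' (z₁ : R) ((k⁻¹ : Rˣ) : R) hz₁,
        sw ((z₁⁻¹ : Rˣ) : R) (z₂ : R) hz₁i,
        sw' ((z₁⁻¹ : Rˣ) : R) (z₂ : R) hz₁i,
        sw ((z₁⁻¹ : Rˣ) : R) ((z₂⁻¹ : Rˣ) : R) hz₁i,
        sw' ((z₁⁻¹ : Rˣ) : R) ((z₂⁻¹ : Rˣ) : R) hz₁i,
        sw ((z₁⁻¹ : Rˣ) : R) (sh : R) hz₁i,
        sw' ((z₁⁻¹ : Rˣ) : R) (sh : R) hz₁i,
        sw ((z₁⁻¹ : Rˣ) : R) ((sh⁻¹ : Rˣ) : R) hz₁i,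
        sw' ((z₁⁻¹ : Rˣ) : R) ((sh⁻¹ : Rˣ) : R) hz₁i,
        sw ((z₁⁻¹ : Rˣ) : R) d hz₁i,
        sw' ((z₁⁻¹ : Rˣ) : R) d hz₁i,
        sw ((z₁⁻¹ : Rˣ) : R) f hz₁i,
        sw' ((z₁⁻¹ : Rˣ) : R) f hz₁i,
        sw ((z₁⁻¹ : Rˣ) : R) e hz₁i,
        sw' ((z₁⁻¹ : Rˣ) : R) e hz₁i,
        sw ((z₁⁻¹ : Rˣ) : R) (k : R) hz₁i,
        sw' ((z₁⁻¹ : Rˣ) : R) (k : R) hz₁i,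
        sw ((z₁⁻¹ : Rˣ) : R) ((k⁻¹ : Rˣ) : R) hz₁i,
        sw' ((z₁⁻¹ : Rˣ) : R) ((k⁻¹ : Rˣ) : R) hz₁i,
        sw (z₂ : R) (sh : R) hz₂,
        sw' (z₂ : R) (sh : R) hz₂,
        sw (z₂ : R) ((sh⁻¹ : Rˣ) : R) hz₂,
        sw' (z₂ : R) ((sh⁻¹ : Rˣ) : R) hz₂,
        sw (z₂ : R) d hz₂,
        sw' (z₂ : R) d hz₂,
        sw (z₂ : R) f hz₂,
        sw' (z₂ : R) f hz₂,
        sw (z₂ : R) e hz₂,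
        sw' (z₂ : R) e hz₂,
        sw (z₂ : R) (k : R) hz₂,
        sw' (z₂ : R) (k : R) hz₂,
        sw (z₂ : R) ((k⁻¹ : Rˣ) : R) hz₂,
        sw' (z₂ : R) ((k⁻¹ : Rˣ) : R) hz₂,
        sw ((z₂⁻¹ : Rˣ) : R) (sh : R) hz₂i,
        sw' ((z₂⁻¹ : Rˣ) : R) (sh : R) hz₂i,
        sw ((z₂⁻¹ : Rˣ) : R) ((sh⁻¹ : Rˣ) : R) hz₂i,
        sw' ((z₂⁻¹ : Rˣ) : R) ((sh⁻¹ : Rˣ) : R) hz₂i,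
        sw ((z₂⁻¹ : Rˣ) : R) d hz₂i,
        sw' ((z₂⁻¹ : Rˣ) : R) d hz₂i,
        sw ((z₂⁻¹ : Rˣ) : R) f hz₂i,
        sw' ((z₂⁻¹ : Rˣ) : R) f hz₂i,
        sw ((z₂⁻¹ : Rˣ) : R) e hz₂i,
        sw' ((z₂⁻¹ : Rˣ) : R) e hz₂i,
        sw ((z₂⁻¹ : Rˣ) : R) (k : R) hz₂i,
        sw' ((z₂⁻¹ : Rˣ) : R) (k : R) hz₂i,
        sw ((z₂⁻¹ : Rˣ) : R) ((k⁻¹ : Rˣ) : R) hz₂i,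
        sw' ((z₂⁻¹ : Rˣ) : R) ((k⁻¹ : Rˣ) : R) hz₂i,
        sw (sh : R) d hsh,
        sw' (sh : R) d hsh,
        sw (sh : R) f hsh,
        sw' (sh : R) f hsh,
        sw (sh : R) e hsh,
        sw' (sh : R) e hsh,
        sw (sh : R) (k : R) hsh,
        sw' (sh : R) (k : R) hsh,
        sw (sh : R) ((k⁻¹ : Rˣ) : R) hsh,
        sw' (sh : R) ((k⁻¹ : Rˣ) : R) hsh,
        sw ((sh⁻¹ : Rˣ) : R) d hshi,
        sw' ((sh⁻¹ : Rˣ) : R) d hshi,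
        sw ((sh⁻¹ : Rˣ) : R) f hshi,
        sw' ((sh⁻¹ : Rˣ) : R) f hshi,
        sw ((sh⁻¹ : Rˣ) : R) e hshi,
        sw' ((sh⁻¹ : Rˣ) : R) e hshi,
        sw ((sh⁻¹ : Rˣ) : R) (k : R) hshi,
        sw' ((sh⁻¹ : Rˣ) : R) (k : R) hshi,
        sw ((sh⁻¹ : Rˣ) : R) ((k⁻¹ : Rˣ) : R) hshi,
        sw' ((sh⁻¹ : Rˣ) : R) ((k⁻¹ : Rˣ) : R) hshi,
        sw d f hdc,
        sw' d f hdc,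
        sw d e hdc,
        sw' d e hdc,
        sw d (k : R) hdc,
        sw' d (k : R) hdc,
        sw d ((k⁻¹ : Rˣ) : R) hdc,
        sw' d ((k⁻¹ : Rˣ) : R) hdc,
        Units.mul_inv_cancel_left,
        Units.inv_mul_cancel_left,
        Units.mul_inv,
        Units.inv_mul,
        hke,
        hkf,
        hkie,
        hkif,
        nest _ _ _ hke,
        nest _ _ _ hkf,
        nest _ _ _ hkie,
        nest _ _ _ hkif,
        hdef0,
        hdefT,
        pow_two,
        mul_add,
        add_mul,
        mul_sub,
        sub_mul,
        mul_one,
        one_mul,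
        mul_assoc]) <;>
      abel
  exact key _ rfl
end

section
/- Mixed Yang–Baxter equation between the q-oscillator L-operator and the six-vertex L-operator: for central invertible ζ₁ = w₁², ζ₂ = w₂² (square roots chosen multiplicatively), one has L⁺_{A,b}(ζ₁/ζ₂) · L⁺_{A,j}(ζ₁) · L_{b,j}(ζ₂) = L_{b,j}(ζ₂) · L⁺_{A,j}(ζ₁) · L⁺_{A,b}(ζ₁/ζ₂) as 4×4 matrices over R acting on ℂ²_b ⊗ ℂ²_j, where L⁺_{A,b}(x) (resp. L⁺_{A,j}(x)) denotes L⁺(x) acting in the two-dimensional space b (resp. j) with entries in R and as identity in the other factor, and L_{b,j}(x) := R(x) is the six-vertex R-matrix acting on b ⊗ j with central entries. -/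
set_option maxHeartbeats 40000000

open Matrix Kronecker

private lemma mv1 {R : Type*} [Ring R] {c : R} (hc : ∀ y : R, c * y = y * c) (g : R) :
    g * c = c * g := (hc g).symm

private lemma mv2 {R : Type*} [Ring R] {c : R} (hc : ∀ y : R, c * y = y * c) (g t : R) :
    g * (c * t) = c * (g * t) := by rw [← mul_assoc, mv1 hc, mul_assoc]

private lemma central_inv {R : Type*} [Ring R] (u : Rˣ) (hu : ∀ y : R, ↑u * y = y * ↑u) :
    ∀ y : R, ↑u⁻¹ * y = y * ↑u⁻¹ := by
  intro y
  have h := hu (y * ↑u⁻¹)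
  rw [Units.inv_mul_cancel_right] at h
  conv_lhs => rw [← h]
  rw [Units.inv_mul_cancel_left]

private lemma central_pow {R : Type*} [Ring R] {c : R} (hc : ∀ y : R, c * y = y * c) (n : ℕ) :
    ∀ y : R, c ^ n * y = y * c ^ n := by
  intro y
  induction n with
  | zero => simp
  | succ m ih => rw [pow_succ, mul_assoc, hc y, ← mul_assoc, ih, mul_assoc]

private lemma inv_rel {R : Type*} [Ring R] (κ : Rˣ) {c c' x : R}
    (hcc' : c' * c = 1) (hc' : ∀ y : R, c' * y = y * c')
    (h : (↑κ : R) * x = c * (x * ↑κ)) : (↑κ⁻¹ : R) * x = c' * (x * ↑κ⁻¹) := by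
  have h2 : x * (↑κ : R) = c' * ((↑κ : R) * x) := by rw [h, ← mul_assoc, hcc', one_mul]
  calc (↑κ⁻¹ : R) * x = ↑κ⁻¹ * (x * ↑κ) * ↑κ⁻¹ := by
        rw [← mul_assoc ((↑κ⁻¹ : R)) x (↑κ : R), Units.mul_inv_cancel_right]
    _ = ↑κ⁻¹ * (c' * (↑κ * x)) * ↑κ⁻¹ := by rw [h2]
    _ = c' * (x * ↑κ⁻¹) := by rw [mv2 hc', Units.inv_mul_cancel_left, mul_assoc]

private lemma relT {R : Type*} [Ring R] {k x c : R} (h : k * x = c * (x * k)) (t : R) :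
    k * (x * t) = c * (x * (k * t)) := by rw [← mul_assoc, h, mul_assoc, mul_assoc]

private lemma relT2 {R : Type*} [Ring R] {x y c : R} (h : x * y = c) (t : R) :
    x * (y * t) = c * t := by rw [← mul_assoc, h]

/-- Mixed Yang–Baxter equation between the q-oscillator L-operator and the
six-vertex L-operator:
`L⁺_{A,b}(ζ₁/ζ₂) L⁺_{A,j}(ζ₁) L_{b,j}(ζ₂) = L_{b,j}(ζ₂) L⁺_{A,j}(ζ₁) L⁺_{A,b}(ζ₁/ζ₂)`
on `ℂ²_b ⊗ ℂ²_j`, with `ζ₁ = w₁²`, `ζ₂ = w₂²` and `(ζ₁/ζ₂)^{1/2} = w₁w₂⁻¹`. -/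
theorem mixed_yang_baxter (R : Type*) [Ring R] [Algebra ℂ R] (s w₁ w₂ κ : Rˣ)
    (a astar : R)
    (hs : ∀ x : R, ↑s * x = x * ↑s)
    (hw₁ : ∀ x : R, ↑w₁ * x = x * ↑w₁)
    (hw₂ : ∀ x : R, ↑w₂ * x = x * ↑w₂)
    (h1 : ↑κ * astar = ↑s ^ 4 * (astar * ↑κ))
    (h2 : ↑κ * a = ↑s⁻¹ ^ 4 * (a * ↑κ))
    (h3 : astar * a = 1 - ↑κ ^ 2)
    (h4 : a * astar = 1 - ↑s ^ 8 * ↑κ ^ 2) :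
    (Lp R s κ a astar (w₁ * w₂⁻¹) ⊗ₖ (1 : Matrix (Fin 2) (Fin 2) R)) *
        ((1 : Matrix (Fin 2) (Fin 2) R) ⊗ₖ Lp R s κ a astar w₁) *
        sixV R ((↑w₂ : R) ^ 2 * ↑s ^ 4 - (↑w₂⁻¹ : R) ^ 2 * ↑s⁻¹ ^ 4)
          ((↑w₂ : R) ^ 2 - (↑w₂⁻¹ : R) ^ 2) ((↑s : R) ^ 4 - (↑s⁻¹ : R) ^ 4) =
      sixV R ((↑w₂ : R) ^ 2 * ↑s ^ 4 - (↑w₂⁻¹ : R) ^ 2 * ↑s⁻¹ ^ 4)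
          ((↑w₂ : R) ^ 2 - (↑w₂⁻¹ : R) ^ 2) ((↑s : R) ^ 4 - (↑s⁻¹ : R) ^ 4) *
        ((1 : Matrix (Fin 2) (Fin 2) R) ⊗ₖ Lp R s κ a astar w₁) *
        (Lp R s κ a astar (w₁ * w₂⁻¹) ⊗ₖ (1 : Matrix (Fin 2) (Fin 2) R)) := by
  have hI : ∀ y : R, (algebraMap ℂ R) Complex.I * y = y * (algebraMap ℂ R) Complex.I :=
    fun y => Algebra.commutes _ _
  have hsi := central_inv s hs
  have hw1i := central_inv w₁ hw₁
  have hw2i := central_inv w₂ hw₂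
  have hs4 := central_pow hs 4
  have hsi4 := central_pow hsi 4
  have hcc1 : ((s⁻¹:Rˣ):R) ^ 4 * ((s:Rˣ):R) ^ 4 = 1 := by
    rw [← Units.val_pow_eq_pow_val, ← Units.val_pow_eq_pow_val, ← Units.val_mul]
    simp [inv_pow]
  have hcc2 : ((s:Rˣ):R) ^ 4 * ((s⁻¹:Rˣ):R) ^ 4 = 1 := by
    rw [← Units.val_pow_eq_pow_val, ← Units.val_pow_eq_pow_val, ← Units.val_mul]
    simp [inv_pow]
  have hk'A := inv_rel κ hcc1 hsi4 h1
  have hk'a := inv_rel κ hcc2 hs4 h2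
  have hp4 : ∀ x : R, x ^ 4 = x * x * (x * x) := fun x => by
    rw [show (4:ℕ) = 2+2 from rfl, pow_add, pow_two]
  have hp8 : ∀ x : R, x ^ 8 = x * x * (x * x) * (x * x * (x * x)) := fun x => by
    rw [show (8:ℕ) = 4+4 from rfl, pow_add, hp4]
  ext ⟨i,j⟩ ⟨k,l⟩
  fin_cases i <;> fin_cases j <;> fin_cases k <;> fin_cases l <;>
  · simp (config := {decide := true}) [Lp, sixV, Matrix.mul_apply, Fintype.sum_prod_type,
      Fin.sum_univ_two, Matrix.one_apply, Matrix.smul_apply, Matrix.kroneckerMap_apply,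
      Prod.ext_iff]
    try simp only [mul_assoc, mul_one, one_mul, mul_add, add_mul, mul_sub, sub_mul, mul_neg,
      neg_mul, neg_neg, pow_two, hp4, hp8, Units.mul_inv, Units.inv_mul,
      Units.mul_inv_cancel_left, Units.inv_mul_cancel_left,
      h1, relT h1, h2, relT h2, hk'A, relT hk'A, hk'a, relT hk'a,
      h3, relT2 h3, h4, relT2 h4,
      mv1 hI ((s:Rˣ):R), mv2 hI ((s:Rˣ):R), mv1 hI ((s⁻¹:Rˣ):R), mv2 hI ((s⁻¹:Rˣ):R), mv1 hI ((w₁:Rˣ):R), mv2 hI ((w₁:Rˣ):R), mv1 hI ((w₁⁻¹:Rˣ):R), mv2 hI ((w₁⁻¹:Rˣ):R), mv1 hI ((w₂:Rˣ):R), mv2 hI ((w₂:Rˣ):R), mv1 hI ((w₂⁻¹:Rˣ):R), mv2 hI ((w₂⁻¹:Rˣ):R), mv1 hI a, mv2 hI a, mv1 hI astar, mv2 hI astar, mv1 hI ((κ:Rˣ):R), mv2 hI ((κ:Rˣ):R), mv1 hI ((κ⁻¹:Rˣ):R), mv2 hI ((κ⁻¹:Rˣ):R), mv1 hs ((s⁻¹:Rˣ):R),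 mv2 hs ((s⁻¹:Rˣ):R), mv1 hs ((w₁:Rˣ):R), mv2 hs ((w₁:Rˣ):R), mv1 hs ((w₁⁻¹:Rˣ):R), mv2 hs ((w₁⁻¹:Rˣ):R), mv1 hs ((w₂:Rˣ):R), mv2 hs ((w₂:Rˣ):R), mv1 hs ((w₂⁻¹:Rˣ):R), mv2 hs ((w₂⁻¹:Rˣ):R), mv1 hs a, mv2 hs a, mv1 hs astar, mv2 hs astar, mv1 hs ((κ:Rˣ):R), mv2 hs ((κ:Rˣ):R), mv1 hs ((κ⁻¹:Rˣ):R), mv2 hs ((κ⁻¹:Rˣ):R), mv1 hsi ((w₁:Rˣ):R), mv2 hsi ((w₁:Rˣ):R), mv1 hsi ((w₁⁻¹:Rˣ):R), mv2 hsi ((w₁⁻¹:Rˣ):R), mv1 hsi ((w₂:Rˣ):R), mv2 hsi ((w₂:Rˣ):R), mv1 hsi ((w₂⁻¹:Rˣ):R), mv2 hsi ((w₂⁻¹:Rˣ):R), mv1 hsi a, mv2 hsi a, mv1 hsi astar, mv2 hsi astar, mv1 hsi ((κ:Rˣ):R), mv2 hsi ((κ:Rˣ):R), mv1 hsi ((κ⁻¹:Rˣ):R),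 mv2 hsi ((κ⁻¹:Rˣ):R), mv1 hw₁ ((w₁⁻¹:Rˣ):R), mv2 hw₁ ((w₁⁻¹:Rˣ):R), mv1 hw₁ ((w₂:Rˣ):R), mv2 hw₁ ((w₂:Rˣ):R), mv1 hw₁ ((w₂⁻¹:Rˣ):R), mv2 hw₁ ((w₂⁻¹:Rˣ):R), mv1 hw₁ a, mv2 hw₁ a, mv1 hw₁ astar, mv2 hw₁ astar, mv1 hw₁ ((κ:Rˣ):R), mv2 hw₁ ((κ:Rˣ):R), mv1 hw₁ ((κ⁻¹:Rˣ):R), mv2 hw₁ ((κ⁻¹:Rˣ):R), mv1 hw1i ((w₂:Rˣ):R), mv2 hw1i ((w₂:Rˣ):R), mv1 hw1i ((w₂⁻¹:Rˣ):R), mv2 hw1i ((w₂⁻¹:Rˣ):R), mv1 hw1i a, mv2 hw1i a, mv1 hw1i astar, mv2 hw1i astar, mv1 hw1i ((κ:Rˣ):R), mv2 hw1i ((κ:Rˣ):R), mv1 hw1i ((κ⁻¹:Rˣ):R), mv2 hw1i ((κ⁻¹:Rˣ):R), mv1 hw₂ ((w₂⁻¹:Rˣ):R), mv2 hw₂ ((w₂⁻¹:Rˣ):R),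 mv1 hw₂ a, mv2 hw₂ a, mv1 hw₂ astar, mv2 hw₂ astar, mv1 hw₂ ((κ:Rˣ):R), mv2 hw₂ ((κ:Rˣ):R), mv1 hw₂ ((κ⁻¹:Rˣ):R), mv2 hw₂ ((κ⁻¹:Rˣ):R), mv1 hw2i a, mv2 hw2i a, mv1 hw2i astar, mv2 hw2i astar, mv1 hw2i ((κ:Rˣ):R), mv2 hw2i ((κ:Rˣ):R), mv1 hw2i ((κ⁻¹:Rˣ):R), mv2 hw2i ((κ⁻¹:Rˣ):R)]
    try abel
end
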